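/- arXiv:2106.09980 — 6 statements merged into one kernel-verified Lean document; each statement's English description precedes it below -/
import Mathlib

section
/- Assume a ≠ βε. Then for all x ∈ ℝ and t > 0, |H₁(x,t)| ≤ (e^{−x²/(4Dt)}/(2√(πDt))) · [e^{−at} + εt · (e^{−βεt} − e^{−at})/(a − βε)]. -/
open Real MeasureTheory Set

noncomputable def J1 (z : ℝ) : ℝ :=
  ∑' k : ℕ, ((-1 : ℝ)^k / ((k.factorial : ℝ) * ((k+1).factorial : ℝ))) * (z/2)^(2*k+1)

noncomputable def J0 (z : ℝ) : ℝ :=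
  ∑' k : ℕ, ((-1 : ℝ)^k / ((k.factorial : ℝ))^2) * (z/2)^(2*k)

noncomputable def I0 (z : ℝ) : ℝ :=
  ∑' k : ℕ, (z/2)^(2*k) / ((k.factorial : ℝ))^2

noncomputable def I1 (z : ℝ) : ℝ :=
  ∑' k : ℕ, (1 / ((k.factorial : ℝ) * ((k+1).factorial : ℝ))) * (z/2)^(2*k+1)

section AuxStmt1

open intervalIntegral

set_option maxHeartbeats 1000000

lemma intC (k : ℕ) : ∫ θ in (0:ℝ)..π, Real.cos θ ^ (2*k)
    = π * (2*k).factorial / (4^k * ((k.factorial:ℝ))^2) := by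
  induction k with
  | zero => simp
  | succ n ih =>
    have h2 : 2*(n+1) = 2*n + 2 := by ring
    have hc1 : (((2*n+2).factorial : ℕ) : ℝ) = (2*(n:ℝ)+2) * (2*n+1) * (2*n).factorial := by
      have h : 2*n+2 = (2*n+1)+1 := by ring
      rw [h, Nat.factorial_succ, Nat.factorial_succ]; push_cast; ring
    have hc2 : (((n+1).factorial : ℕ) : ℝ) = ((n:ℝ)+1) * n.factorial := by
      rw [Nat.factorial_succ]; push_cast; ring
    have hf : (0:ℝ) < (2*n).factorial := by exact_mod_cast (2*n).factorial_pos
    have hg : (0:ℝ) < n.factorial := by exact_mod_cast n.factorial_pos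
    rw [h2, integral_cos_pow, ih, hc1, hc2]
    simp only [Real.sin_pi, Real.sin_zero, mul_zero, zero_mul, sub_zero, zero_sub, neg_zero,
      zero_div, zero_add]
    push_cast
    field_simp
    ring

lemma intW (k : ℕ) : ∫ θ in (0:ℝ)..π, Real.cos θ ^ (2*k) * Real.sin θ ^ 2
    = π * (2*k).factorial / (2 * 4^k * (k.factorial:ℝ) * ((k+1).factorial:ℝ)) := by
  have hsplit : ∀ θ : ℝ, Real.cos θ ^ (2*k) * Real.sin θ ^ 2
      = Real.cos θ ^ (2*k) - Real.cos θ ^ (2*(k+1)) := by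
    intro θ
    have := Real.sin_sq_add_cos_sq θ
    have h : Real.sin θ ^ 2 = 1 - Real.cos θ ^ 2 := by linarith
    rw [h]; ring
  simp only [hsplit]
  rw [intervalIntegral.integral_sub
      ((by fun_prop : Continuous fun θ => Real.cos θ ^ (2*k)).intervalIntegrable 0 π)
      ((by fun_prop : Continuous fun θ => Real.cos θ ^ (2*(k+1))).intervalIntegrable 0 π), intC, intC]
  have hc1 : (((2*(k+1)).factorial : ℕ) : ℝ) = (2*(k:ℝ)+2) * (2*k+1) * (2*k).factorial := by
    have h : 2*(k+1) = (2*k+1)+1 := by ring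
    rw [h, Nat.factorial_succ, Nat.factorial_succ]; push_cast; ring
  have hc2 : (((k+1).factorial : ℕ) : ℝ) = ((k:ℝ)+1) * k.factorial := by
    rw [Nat.factorial_succ]; push_cast; ring
  have hf : (0:ℝ) < (2*k).factorial := by exact_mod_cast (2*k).factorial_pos
  have hg : (0:ℝ) < k.factorial := by exact_mod_cast k.factorial_pos
  rw [hc1, hc2]
  push_cast
  field_simp
  ring

lemma J1_abs_le (x : ℝ) : |J1 x| ≤ |x| / 2 := by
  set g : ℕ → ℝ → ℝ := fun k θ =>
    ((-1:ℝ)^k * x^(2*k) / ((2*k).factorial : ℝ)) * (Real.cos θ ^ (2*k) * Real.sin θ ^ 2) with hg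
  have hgcont : ∀ k, Continuous (g k) := by
    intro k; fun_prop
  have hgint : ∀ k, IntegrableOn (g k) (Ioc (0:ℝ) π) := by
    intro k; exact (hgcont k).integrableOn_Ioc
  -- value of each integral
  have hval : ∀ k, (∫ θ in Ioc (0:ℝ) π, g k θ)
      = ((-1:ℝ)^k * x^(2*k) / ((2*k).factorial : ℝ)) *
        (π * (2*k).factorial / (2 * 4^k * (k.factorial:ℝ) * ((k+1).factorial:ℝ))) := by
    intro k
    rw [← intervalIntegral.integral_of_le Real.pi_pos.le, intervalIntegral.integral_const_mul,
      intW]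
  -- norm bound for each integral
  have hnorm : ∀ k, (∫ θ in Ioc (0:ℝ) π, ‖g k θ‖) ≤ |x|^(2*k) / ((2*k).factorial : ℝ) * π := by
    intro k
    have hb : ∀ θ ∈ Ioc (0:ℝ) π, ‖g k θ‖ ≤ |x|^(2*k) / ((2*k).factorial : ℝ) := by
      intro θ _
      have h1 : |Real.cos θ ^ (2*k) * Real.sin θ ^ 2| ≤ 1 := by
        rw [abs_mul, abs_pow, abs_pow]
        have hck : |Real.cos θ|^(2*k) ≤ 1 :=
          pow_le_one₀ (abs_nonneg _) (Real.abs_cos_le_one θ)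
        have hsk : |Real.sin θ|^2 ≤ 1 :=
          pow_le_one₀ (abs_nonneg _) (Real.abs_sin_le_one θ)
        exact mul_le_one₀ hck (pow_nonneg (abs_nonneg _) 2) hsk
      have h2 : |((-1:ℝ)^k * x^(2*k) / ((2*k).factorial : ℝ))|
          = |x|^(2*k) / ((2*k).factorial : ℝ) := by
        simp [abs_mul, abs_div, abs_pow]
      calc ‖g k θ‖ = |((-1:ℝ)^k * x^(2*k) / ((2*k).factorial : ℝ))| *
            |Real.cos θ ^ (2*k) * Real.sin θ ^ 2| := by rw [hg]; exact abs_mul _ _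
        _ ≤ |((-1:ℝ)^k * x^(2*k) / ((2*k).factorial : ℝ))| * 1 := by
            exact mul_le_mul_of_nonneg_left h1 (abs_nonneg _)
        _ = |x|^(2*k) / ((2*k).factorial : ℝ) := by rw [mul_one, h2]
    calc (∫ θ in Ioc (0:ℝ) π, ‖g k θ‖)
        ≤ ∫ _ in Ioc (0:ℝ) π, (|x|^(2*k) / ((2*k).factorial : ℝ)) := by
          refine setIntegral_mono_on ((hgint k).norm) (integrableOn_const ?_)
            measurableSet_Ioc hb
          simp [Real.pi_pos]
      _ = |x|^(2*k) / ((2*k).factorial : ℝ) * π := by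
          rw [setIntegral_const]
          simp [Real.volume_Ioc, Real.pi_pos.le, smul_eq_mul, mul_comm]
  have hsummaj : Summable (fun k : ℕ => |x|^(2*k) / ((2*k).factorial : ℝ) * π) := by
    have h1 : Summable (fun n : ℕ => |x|^n / (n.factorial : ℝ)) :=
      Real.summable_pow_div_factorial |x|
    have h2 : Summable (fun k : ℕ => |x|^(2*k) / ((2*k).factorial : ℝ)) :=
      h1.comp_injective (fun a b h => by omega)
    exact h2.mul_right π
  have hsum : Summable (fun k : ℕ => ∫ θ in Ioc (0:ℝ) π, ‖g k θ‖) := by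
    refine Summable.of_nonneg_of_le (fun k => ?_) (fun k => hnorm k) hsummaj
    exact integral_nonneg (fun θ => norm_nonneg _)
  -- swap
  have hswap := MeasureTheory.integral_tsum_of_summable_integral_norm hgint hsum
  -- pointwise sum
  have hpt : ∀ θ : ℝ, (∑' k, g k θ) = Real.cos (x * Real.cos θ) * Real.sin θ ^ 2 := by
    intro θ
    rw [Real.cos_eq_tsum (x * Real.cos θ), ← tsum_mul_right]
    congr 1; funext k
    rw [hg]; simp only []
    rw [mul_pow]
    ring
  -- J1' x = (x/π) * ∫ ...
  have hJ : J1 x = (x/π) * ∫ θ in Ioc (0:ℝ) π, Real.cos (x * Real.cos θ) * Real.sin θ ^ 2 := by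
    have hterm : ∀ k : ℕ, ((-1 : ℝ)^k / ((k.factorial : ℝ) * ((k+1).factorial : ℝ))) * (x/2)^(2*k+1)
        = (x/π) * ∫ θ in Ioc (0:ℝ) π, g k θ := by
      intro k
      rw [hval k]
      have hp : (x/2)^(2*k+1) = x^(2*k+1) / (2 * 4^k) := by
        rw [div_pow]
        congr 1
        rw [pow_succ, pow_mul]
        norm_num
        ring
      have hfac : (0:ℝ) < (2*k).factorial := by exact_mod_cast (2*k).factorial_pos
      have hf1 : (0:ℝ) < (k.factorial : ℝ) := by exact_mod_cast k.factorial_pos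
      have hf2 : (0:ℝ) < ((k+1).factorial : ℝ) := by exact_mod_cast (k+1).factorial_pos
      have h4 : (0:ℝ) < (4:ℝ)^k := by positivity
      rw [hp]
      have hpi := Real.pi_pos
      field_simp
      ring
    rw [J1]
    simp only [hterm]
    rw [tsum_mul_left, hswap]
    congr 1
    congr 1
    funext θ
    exact hpt θ
  -- final bound
  rw [hJ]
  have hIbound : |∫ θ in Ioc (0:ℝ) π, Real.cos (x * Real.cos θ) * Real.sin θ ^ 2| ≤ π / 2 := by
    have h1 : |∫ θ in Ioc (0:ℝ) π, Real.cos (x * Real.cos θ) * Real.sin θ ^ 2|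
        ≤ ∫ θ in Ioc (0:ℝ) π, Real.sin θ ^ 2 := by
      rw [← Real.norm_eq_abs]
      refine (MeasureTheory.norm_integral_le_integral_norm _).trans ?_
      refine setIntegral_mono_on ?_ ?_ measurableSet_Ioc ?_
      · exact ((Continuous.mul (by fun_prop) (by fun_prop)).integrableOn_Ioc).norm
      · exact (Continuous.pow Real.continuous_sin 2).integrableOn_Ioc
      · intro θ _
        rw [norm_mul, Real.norm_eq_abs, Real.norm_eq_abs, abs_pow]
        calc |Real.cos (x * Real.cos θ)| * |Real.sin θ|^2 ≤ 1 * |Real.sin θ|^2 := by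
              gcongr; exact Real.abs_cos_le_one _
          _ = Real.sin θ ^ 2 := by rw [one_mul, sq_abs]
    have h2 : (∫ θ in Ioc (0:ℝ) π, Real.sin θ ^ 2) = π / 2 := by
      rw [← intervalIntegral.integral_of_le Real.pi_pos.le]
      simp
    rw [h2] at h1; exact h1
  rw [abs_mul, abs_div, abs_of_pos Real.pi_pos]
  calc |x| / π * |∫ θ in Ioc (0:ℝ) π, Real.cos (x * Real.cos θ) * Real.sin θ ^ 2|
      ≤ |x| / π * (π / 2) := by gcongr
    _ = |x| / 2 := by field_simp [Real.pi_ne_zero]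

end AuxStmt1

noncomputable def H1 (D a ε β : ℝ) (x t : ℝ) : ℝ :=
  Real.exp (-x^2/(4*D*t)) / (2 * Real.sqrt (π*D*t)) * Real.exp (-a*t)
  - (1/2) * ∫ y in (0:ℝ)..t,
      (Real.exp (-x^2/(4*D*y) - a*y) / Real.sqrt (t-y)) *
      (Real.sqrt ε * Real.exp (-β*ε*(t-y)) / Real.sqrt (π*D)) *
      J1 (2 * Real.sqrt (ε*y*(t-y)))

noncomputable def H2 (D a ε β δ d : ℝ) (x t : ℝ) : ℝ :=
  ∫ y in (0:ℝ)..t, H1 D a ε β x y * Real.exp (-δ*d*(t-y)) *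
    Real.sqrt (δ*y/(t-y)) * J1 (2 * Real.sqrt (δ*y*(t-y)))

noncomputable def Hker (D a ε β δ d : ℝ) (x t : ℝ) : ℝ :=
  H1 D a ε β x t - H2 D a ε β δ d x t

noncomputable def Kdelta (D a ε β δ d : ℝ) (x t : ℝ) : ℝ :=
  ∫ y in (0:ℝ)..t, Real.exp (-δ*d*(t-y)) * H1 D a ε β x y *
    J0 (2 * Real.sqrt (δ*y*(t-y)))

noncomputable def Hdelta (D a ε β δ d : ℝ) (x t : ℝ) : ℝ :=
  ∫ τ in (0:ℝ)..t, Real.exp (-β*ε*(t-τ)) * Kdelta D a ε β δ d x τ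

set_option maxHeartbeats 1000000 in
theorem stmt1 (D a ε β δ d : ℝ) (hD : 0 < D) (ha : 0 < a) (hε : 0 < ε) (hβ : 0 < β) (hδ : 0 < δ) (hd : 0 < d) (hne : a ≠ β*ε) :
    ∀ x t : ℝ, 0 < t →
      |H1 D a ε β x t| ≤
        Real.exp (-x^2/(4*D*t)) / (2 * Real.sqrt (π*D*t)) *
          (Real.exp (-a*t) + ε*t*((Real.exp (-(β*ε)*t) - Real.exp (-a*t))/(a - β*ε))) := by
  intro x t ht
  have hπD : 0 < π*D := mul_pos Real.pi_pos hD
  have hπDt : 0 < π*D*t := mul_pos hπD ht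
  have hsπD : (0:ℝ) < Real.sqrt (π*D) := Real.sqrt_pos.2 hπD
  have hst : (0:ℝ) < Real.sqrt t := Real.sqrt_pos.2 ht
  set A : ℝ := Real.exp (-x^2/(4*D*t)) / (2 * Real.sqrt (π*D*t)) with hA
  set C0 : ℝ := Real.exp (-x^2/(4*D*t)) * ε * Real.sqrt t / Real.sqrt (π*D) with hC0
  set S : ℝ := ∫ y in (0:ℝ)..t, Real.exp (-a*y - β*ε*(t-y)) with hS
  set f : ℝ → ℝ := fun y =>
      (Real.exp (-x^2/(4*D*y) - a*y) / Real.sqrt (t-y)) *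
      (Real.sqrt ε * Real.exp (-β*ε*(t-y)) / Real.sqrt (π*D)) *
      J1 (2 * Real.sqrt (ε*y*(t-y))) with hf
  -- value of S
  have hc0 : β*ε - a ≠ 0 := fun h => hne (by linarith)
  have hSval : S = (Real.exp (-(β*ε)*t) - Real.exp (-a*t)) / (a - β*ε) := by
    have h1 : ∀ y : ℝ, Real.exp (-a*y - β*ε*(t-y))
        = Real.exp (-(β*ε)*t) * Real.exp ((β*ε - a)*y) := by
      intro y; rw [← Real.exp_add]; ring_nf
    have h2 : (∫ y in (0:ℝ)..t, Real.exp ((β*ε - a)*y))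
        = (Real.exp ((β*ε - a)*t) - 1)/(β*ε - a) := by
      have hder : ∀ y ∈ Set.uIcc (0:ℝ) t,
          HasDerivAt (fun y => Real.exp ((β*ε - a)*y)/(β*ε - a)) (Real.exp ((β*ε - a)*y)) y := by
        intro y _
        have h3 : HasDerivAt (fun y : ℝ => (β*ε - a)*y) (β*ε - a) y := by
          simpa using (hasDerivAt_id y).const_mul (β*ε - a)
        have h4 := (Real.hasDerivAt_exp ((β*ε - a)*y)).comp y h3
        have h5 := h4.div_const (β*ε - a)
        simpa [mul_div_assoc, mul_div_cancel_right₀ _ hc0] using h5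
      have h6 := intervalIntegral.integral_eq_sub_of_hasDerivAt hder
        (Continuous.intervalIntegrable (by fun_prop) 0 t)
      rw [h6]
      simp
      ring
    rw [hS]
    simp only [h1]
    rw [intervalIntegral.integral_const_mul, h2]
    have h7 : Real.exp (-(β*ε)*t) * Real.exp ((β*ε - a)*t) = Real.exp (-a*t) := by
      rw [← Real.exp_add]; ring_nf
    have hane : a - β*ε ≠ 0 := sub_ne_zero.2 hne
    rw [eq_div_iff hane]
    have h8 : (Real.exp ((β*ε - a)*t) - 1)/(β*ε - a) * (a - β*ε)
        = 1 - Real.exp ((β*ε - a)*t) := by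
      rw [div_mul_eq_mul_div, div_eq_iff hc0]
      ring
    calc Real.exp (-(β*ε)*t) * ((Real.exp ((β*ε - a)*t) - 1)/(β*ε - a)) * (a - β*ε)
        = Real.exp (-(β*ε)*t) * ((Real.exp ((β*ε - a)*t) - 1)/(β*ε - a) * (a - β*ε)) := by
          ring
      _ = Real.exp (-(β*ε)*t) * (1 - Real.exp ((β*ε - a)*t)) := by rw [h8]
      _ = Real.exp (-(β*ε)*t) - Real.exp (-(β*ε)*t) * Real.exp ((β*ε - a)*t) := by ring
      _ = Real.exp (-(β*ε)*t) - Real.exp (-a*t) := by rw [h7]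
  have hSnonneg : 0 ≤ S :=
    intervalIntegral.integral_nonneg ht.le (fun y _ => (Real.exp_pos _).le)
  -- pointwise bound
  have hpt : ∀ y ∈ Set.Ioc (0:ℝ) t, |f y| ≤ C0 * Real.exp (-a*y - β*ε*(t-y)) := by
    intro y hy
    rcases eq_or_lt_of_le hy.2 with hyt | hyt
    · -- y = t
      have h0 : Real.sqrt (t - y) = 0 := by rw [hyt]; simp
      have : f y = 0 := by rw [hf]; simp [h0]
      rw [this, abs_zero]
      positivity
    · have hy0 := hy.1
      have hty : (0:ℝ) < t - y := by linarith
      have hsty : (0:ℝ) < Real.sqrt (t-y) := Real.sqrt_pos.2 hty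
      set z : ℝ := 2 * Real.sqrt (ε*y*(t-y)) with hz
      have hJ : |J1 z| ≤ Real.sqrt ε * Real.sqrt y * Real.sqrt (t-y) := by
        have h1 := J1_abs_le z
        have h2 : |z| / 2 = Real.sqrt (ε*y*(t-y)) := by
          rw [hz, abs_of_nonneg (by positivity)]; ring
        have h3 : Real.sqrt (ε*y*(t-y)) = Real.sqrt ε * Real.sqrt y * Real.sqrt (t-y) := by
          rw [Real.sqrt_mul (by positivity), Real.sqrt_mul hε.le]
        rw [h2, h3] at h1; exact h1
      set P : ℝ := Real.exp (-x^2/(4*D*y) - a*y) / Real.sqrt (t-y) with hP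
      set Q : ℝ := Real.sqrt ε * Real.exp (-β*ε*(t-y)) / Real.sqrt (π*D) with hQ
      have hPpos : 0 ≤ P := by positivity
      have hQpos : 0 ≤ Q := by positivity
      have step1 : |f y| ≤ P * Q * (Real.sqrt ε * Real.sqrt y * Real.sqrt (t-y)) := by
        have : |f y| = P * Q * |J1 z| := by
          rw [hf]
          simp only []
          rw [abs_mul, abs_mul, abs_of_nonneg hPpos, abs_of_nonneg hQpos]
        rw [this]
        exact mul_le_mul_of_nonneg_left hJ (by positivity)
      have step2 : P * Q * (Real.sqrt ε * Real.sqrt y * Real.sqrt (t-y))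
          = (Real.exp (-x^2/(4*D*y)) * Real.sqrt y) *
            (ε * Real.exp (-a*y - β*ε*(t-y)) / Real.sqrt (π*D)) := by
        rw [hP, hQ]
        have e3 : Real.sqrt ε * Real.sqrt ε = ε := Real.mul_self_sqrt hε.le
        have eA : Real.exp (-x^2/(4*D*y) - a*y) * Real.exp (-β*ε*(t-y))
            = Real.exp (-x^2/(4*D*y)) * Real.exp (-a*y - β*ε*(t-y)) := by
          rw [← Real.exp_add, ← Real.exp_add]; ring_nf
        have hs : Real.sqrt (t-y) ≠ 0 := hsty.ne'
        have hw : Real.sqrt (π*D) ≠ 0 := hsπD.ne'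
        generalize Real.exp (-x^2/(4*D*y) - a*y) = E1 at eA ⊢
        generalize Real.exp (-β*ε*(t-y)) = G at eA ⊢
        generalize Real.exp (-x^2/(4*D*y)) = E at eA ⊢
        generalize Real.exp (-a*y - β*ε*(t-y)) = X at eA ⊢
        field_simp
        linear_combination (Real.sqrt ε * Real.sqrt ε) * eA + (E * X) * e3
      have step3 : Real.exp (-x^2/(4*D*y)) * Real.sqrt y
          ≤ Real.exp (-x^2/(4*D*t)) * Real.sqrt t := by
        have e4 : Real.exp (-x^2/(4*D*y)) ≤ Real.exp (-x^2/(4*D*t)) := by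
          apply Real.exp_le_exp.2
          rw [neg_div, neg_div, neg_le_neg_iff]
          have h4y : (0:ℝ) < 4*D*y := mul_pos (mul_pos (by norm_num) hD) hy0
          have h4t : (0:ℝ) < 4*D*t := mul_pos (mul_pos (by norm_num) hD) ht
          rw [div_le_div_iff₀ h4t h4y]
          exact mul_le_mul_of_nonneg_left (by nlinarith) (sq_nonneg x)
        exact mul_le_mul e4 (Real.sqrt_le_sqrt hyt.le) (Real.sqrt_nonneg _) (Real.exp_pos _).le
      calc |f y| ≤ P * Q * (Real.sqrt ε * Real.sqrt y * Real.sqrt (t-y)) := step1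
        _ = (Real.exp (-x^2/(4*D*y)) * Real.sqrt y) *
            (ε * Real.exp (-a*y - β*ε*(t-y)) / Real.sqrt (π*D)) := step2
        _ ≤ (Real.exp (-x^2/(4*D*t)) * Real.sqrt t) *
            (ε * Real.exp (-a*y - β*ε*(t-y)) / Real.sqrt (π*D)) := by
            exact mul_le_mul_of_nonneg_right step3 (by positivity)
        _ = C0 * Real.exp (-a*y - β*ε*(t-y)) := by rw [hC0]; field_simp
  -- integral bound
  have hIbound : |∫ y in (0:ℝ)..t, f y| ≤ C0 * S := by
    have hgint : IntervalIntegrable (fun y => C0 * Real.exp (-a*y - β*ε*(t-y))) volume 0 t :=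
      Continuous.intervalIntegrable (by fun_prop) 0 t
    have hae : ∀ᵐ y ∂(volume.restrict (Set.uIoc 0 t)), ‖f y‖ ≤ C0 * Real.exp (-a*y - β*ε*(t-y)) := by
      refine (ae_restrict_mem measurableSet_uIoc).mono (fun y hy => ?_)
      rw [Set.uIoc_of_le ht.le] at hy
      exact hpt y hy
    have h1 := intervalIntegral.norm_integral_le_abs_of_norm_le hae hgint
    rw [Real.norm_eq_abs] at h1
    refine h1.trans ?_
    rw [intervalIntegral.integral_const_mul, ← hS]
    rw [abs_of_nonneg (mul_nonneg (by positivity) hSnonneg)]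
  -- assemble
  have hH : H1 D a ε β x t = A * Real.exp (-a*t) - (1/2) * ∫ y in (0:ℝ)..t, f y := rfl
  have hineq : |H1 D a ε β x t| ≤ A * Real.exp (-a*t) + (1/2) * (C0 * S) := by
    rw [hH]
    refine (abs_sub _ _).trans ?_
    rw [abs_of_nonneg (by positivity), abs_mul, abs_of_nonneg (by norm_num : (0:ℝ) ≤ 1/2)]
    exact add_le_add le_rfl (mul_le_mul_of_nonneg_left hIbound (by norm_num))
  have hhalf : (1/2) * C0 = A * (ε * t) := by
    rw [hA, hC0]
    have e5 : Real.sqrt (π*D*t) = Real.sqrt (π*D) * Real.sqrt t := Real.sqrt_mul hπD.le t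
    have e6 : Real.sqrt t * Real.sqrt t = t := Real.mul_self_sqrt ht.le
    have hw : Real.sqrt (π*D) ≠ 0 := hsπD.ne'
    have hst' : Real.sqrt t ≠ 0 := hst.ne'
    rw [e5]
    field_simp
    linear_combination e6
  calc |H1 D a ε β x t| ≤ A * Real.exp (-a*t) + (1/2) * (C0 * S) := hineq
    _ = A * Real.exp (-a*t) + A * (ε * t) * S := by rw [← mul_assoc, hhalf]
    _ = A * (Real.exp (-a*t) + ε*t*((Real.exp (-(β*ε)*t) - Real.exp (-a*t))/(a - β*ε))) := by
        rw [← hSval]; ring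
end

section
/- Assume a, βε, δd are pairwise distinct. Then for all x ∈ ℝ and t > 0, |H₂(x,t)| ≤ (δt · e^{−x²/(4Dt)}/(2√(πDt))) · [ ((e^{−δdt} − e^{−at})/(a − δd)) · (1 + εt/|a − βε|) + (εt/|a − βε|) · ((e^{−δdt} − e^{−βεt})/(βε − δd)) ]. -/
open Real MeasureTheory Set

lemma int_exp_mul (k T : ℝ) (hk : k ≠ 0) :
    ∫ y in (0:ℝ)..T, Real.exp (k*y) = (Real.exp (k*T) - 1)/k := by
  have h : ∀ y ∈ Set.uIcc (0:ℝ) T, HasDerivAt (fun y => Real.exp (k*y)/k) (Real.exp (k*y)) y := by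
    intro y _
    have := (((hasDerivAt_id y).const_mul k).exp).div_const k
    simpa [mul_comm, hk, mul_div_assoc, mul_div_cancel_left₀] using this
  rw [intervalIntegral.integral_eq_sub_of_hasDerivAt h
    ((Real.continuous_exp.comp (continuous_const.mul continuous_id)).intervalIntegrable 0 T)]
  simp [sub_div]

lemma int_exp2 (c e t : ℝ) (h : e ≠ c) :
    ∫ y in (0:ℝ)..t, Real.exp (-e*(t-y) - c*y) = (Real.exp (-e*t) - Real.exp (-c*t))/(c - e) := by
  have hk : e - c ≠ 0 := sub_ne_zero.mpr h
  have : ∀ y : ℝ, Real.exp (-e*(t-y) - c*y) = Real.exp ((e-c)*y) * Real.exp (-e*t) := by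
    intro y; rw [← Real.exp_add]; ring_nf
  simp_rw [this]
  rw [intervalIntegral.integral_mul_const, int_exp_mul _ _ hk]
  rw [div_mul_eq_mul_div, sub_mul, ← Real.exp_add]
  rw [div_eq_div_iff hk (sub_ne_zero.mpr (sub_ne_zero.mpr h ∘ fun q => by linarith [q]))]
  · ring_nf
  

lemma sin_even_closed (k : ℕ) :
    ∫ x in (0:ℝ)..π, Real.sin x ^ (2*k) = π * (2*k).factorial / (4^k * (k.factorial:ℝ)^2) := by
  induction k with
  | zero => simp
  | succ n ih =>
      have h2 : 2*(n+1) = 2*n + 2 := by ring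
      rw [h2, integral_sin_pow, ih]
      simp only [Real.sin_zero, Real.sin_pi, zero_pow, Nat.succ_ne_zero, ne_eq,
        Nat.add_eq_zero, and_false, not_false_iff, zero_mul, sub_zero, zero_sub, neg_zero, zero_div, zero_add]
      have hf : (0:ℝ) < (n.factorial:ℝ) := by exact_mod_cast n.factorial_pos
      have e1 : ((2*n+2).factorial : ℝ) = (2*(n:ℝ)+2) * ((2*(n:ℝ)+1) * (2*n).factorial) := by
        rw [show 2*n+2 = (2*n+1) + 1 by ring, Nat.factorial_succ, Nat.factorial_succ]
        push_cast; ring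
      have e2 : ((n+1).factorial : ℝ) = ((n:ℝ)+1) * n.factorial := by
        rw [Nat.factorial_succ]; push_cast; ring
      rw [e1, e2]
      have hn1 : (0:ℝ) < (n:ℝ)+1 := by positivity
      have h4 : (0:ℝ) < 4^n := by positivity
      field_simp
      push_cast
      ring

lemma sin_even_cos_sq (k : ℕ) :
    ∫ x in (0:ℝ)..π, Real.sin x ^ (2*k) * Real.cos x ^ 2
      = π * (2*k).factorial / (2^(2*k+1) * (k.factorial:ℝ) * ((k+1).factorial:ℝ)) := by
  have hsplit : ∀ x : ℝ, Real.sin x ^ (2*k) * Real.cos x ^ 2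
      = Real.sin x ^ (2*k) - Real.sin x ^ (2*(k+1)) := by
    intro x
    have := Real.sin_sq_add_cos_sq x
    have hc : Real.cos x ^ 2 = 1 - Real.sin x ^ 2 := by linarith
    rw [hc]; ring
  simp_rw [hsplit]
  rw [intervalIntegral.integral_sub (f := fun x => Real.sin x ^ (2*k)) (g := fun x => Real.sin x ^ (2*(k+1)))
      ((Real.continuous_sin.pow _).intervalIntegrable 0 π)
      ((Real.continuous_sin.pow _).intervalIntegrable 0 π),
    sin_even_closed, sin_even_closed]
  have hf : (0:ℝ) < (k.factorial:ℝ) := by exact_mod_cast k.factorial_pos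
  have e1 : ((2*(k+1)).factorial : ℝ) = (2*(k:ℝ)+2) * ((2*(k:ℝ)+1) * (2*k).factorial) := by
    rw [show 2*(k+1) = (2*k+1) + 1 by ring, Nat.factorial_succ, Nat.factorial_succ]
    push_cast; ring
  have e2 : ((k+1).factorial : ℝ) = ((k:ℝ)+1) * k.factorial := by
    rw [Nat.factorial_succ]; push_cast; ring
  rw [e1, e2]
  have hn1 : (0:ℝ) < (k:ℝ)+1 := by positivity
  have h4 : (0:ℝ) < 4^k := by positivity
  have h2k : (2:ℝ)^(2*k+1) = 2 * 4^k := by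
    rw [pow_succ']
    congr 1
    rw [pow_mul]; norm_num
  rw [h2k]
  field_simp
  ring
lemma cos_int_swap (z : ℝ) :
    ∫ x in Set.Ioc (0:ℝ) π, Real.cos (z * Real.sin x) * Real.cos x ^ 2
      = ∑' k : ℕ, ∫ x in Set.Ioc (0:ℝ) π,
          ((-1:ℝ)^k * (z * Real.sin x)^(2*k) / (2*k).factorial) * Real.cos x ^ 2 := by
  set F : ℕ → ℝ → ℝ := fun k x => ((-1:ℝ)^k * (z * Real.sin x)^(2*k) / (2*k).factorial) * Real.cos x ^ 2 with hF
  have hcont : ∀ k, Continuous (F k) := by intro k; rw [hF]; fun_prop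
  have hint : ∀ k, IntegrableOn (F k) (Set.Ioc (0:ℝ) π) volume := fun k =>
    ((hcont k).intervalIntegrable 0 π).1
  have hbd : ∀ k x, ‖F k x‖ ≤ |z|^(2*k) / (2*k).factorial := by
    intro k x
    have h1 : ‖F k x‖ = (|z| * |Real.sin x|)^(2*k) / (2*k).factorial * Real.cos x ^ 2 := by
      rw [hF]
      simp only [Real.norm_eq_abs, abs_mul, abs_div, abs_pow, abs_neg, abs_one, one_pow,
        one_mul, Nat.abs_cast, sq_abs, abs_mul]
    have h2 : (|z| * |Real.sin x|)^(2*k) ≤ |z|^(2*k) := by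
      apply pow_le_pow_left₀ (by positivity)
      calc |z| * |Real.sin x| ≤ |z| * 1 :=
            mul_le_mul_of_nonneg_left (Real.abs_sin_le_one x) (abs_nonneg z)
        _ = |z| := mul_one _
    rw [h1]
    calc (|z| * |Real.sin x|)^(2*k) / (2*k).factorial * Real.cos x ^ 2
        ≤ (|z| * |Real.sin x|)^(2*k) / (2*k).factorial * 1 :=
          mul_le_mul_of_nonneg_left (Real.cos_sq_le_one x) (by positivity)
      _ = (|z| * |Real.sin x|)^(2*k) / (2*k).factorial := mul_one _
      _ ≤ |z|^(2*k) / (2*k).factorial := by gcongr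
  have hsum : Summable (fun k : ℕ => π * (|z|^(2*k) / (2*k).factorial)) := by
    have h0 : Summable (fun n : ℕ => |z|^n / n.factorial) := Real.summable_pow_div_factorial |z|
    have hg : Function.Injective (fun k : ℕ => 2*k) := by
      intro a b h; simp only at h; omega
    exact (h0.comp_injective hg).mul_left π
  have hnorm : ∀ k, ∫ x in Set.Ioc (0:ℝ) π, ‖F k x‖ ≤ π * (|z|^(2*k) / (2*k).factorial) := by
    intro k
    have hle := setIntegral_mono_on (hint k).norm
      (integrableOn_const measure_Ioc_lt_top.ne) measurableSet_Ioc
      (fun x _ => hbd k x)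
    calc ∫ x in Set.Ioc (0:ℝ) π, ‖F k x‖ ≤ ∫ _x in Set.Ioc (0:ℝ) π, (|z|^(2*k) / (2*k).factorial) := hle
      _ = π * (|z|^(2*k) / (2*k).factorial) := by
          rw [setIntegral_const, measureReal_def, Real.volume_Ioc, smul_eq_mul, sub_zero,
            ENNReal.toReal_ofReal Real.pi_pos.le]
  have hswap := integral_tsum_of_summable_integral_norm hint
    (Summable.of_nonneg_of_le (fun k => integral_nonneg fun x => norm_nonneg _) hnorm hsum)
  have key : ∀ x : ℝ, Real.cos (z * Real.sin x) * Real.cos x ^ 2 = ∑' k, F k x := by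
    intro x
    rw [Real.cos_eq_tsum (z * Real.sin x), ← tsum_mul_right]
  calc ∫ x in Set.Ioc (0:ℝ) π, Real.cos (z * Real.sin x) * Real.cos x ^ 2
      = ∫ x in Set.Ioc (0:ℝ) π, ∑' k, F k x := by simp_rw [key]
    _ = ∑' k, ∫ x in Set.Ioc (0:ℝ) π, F k x := hswap.symm
lemma J1_rep (z : ℝ) :
    J1 z = (z/π) * ∫ x in (0:ℝ)..π, Real.cos (z * Real.sin x) * Real.cos x ^ 2 := by
  rw [intervalIntegral.integral_of_le Real.pi_pos.le, cos_int_swap, ← tsum_mul_left]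
  apply tsum_congr
  intro k
  have e1 : ∫ x in Set.Ioc (0:ℝ) π, ((-1:ℝ)^k * (z*Real.sin x)^(2*k)/(2*k).factorial) * Real.cos x^2
      = ((-1:ℝ)^k * z^(2*k)/(2*k).factorial) * ∫ x in Set.Ioc (0:ℝ) π, Real.sin x^(2*k) * Real.cos x^2 := by
    rw [← MeasureTheory.integral_const_mul]
    congr 1; funext x; rw [mul_pow]; ring
  rw [e1, ← intervalIntegral.integral_of_le Real.pi_pos.le, sin_even_cos_sq]
  have hπ : (π:ℝ) ≠ 0 := Real.pi_ne_zero
  have hf1 : ((2*k).factorial:ℝ) ≠ 0 := Nat.cast_ne_zero.mpr (2*k).factorial_ne_zero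
  have hf2 : ((k).factorial:ℝ) ≠ 0 := Nat.cast_ne_zero.mpr k.factorial_ne_zero
  have hf3 : (((k+1)).factorial:ℝ) ≠ 0 := Nat.cast_ne_zero.mpr (k+1).factorial_ne_zero
  have h2 : ((2:ℝ))^(2*k+1) ≠ 0 := by positivity
  rw [div_pow]
  field_simp
  ring

lemma abs_J1_le {z : ℝ} (hz : 0 ≤ z) : |J1 z| ≤ z / 2 := by
  rw [J1_rep]
  have hb : ‖∫ x in (0:ℝ)..π, Real.cos (z * Real.sin x) * Real.cos x ^ 2‖
      ≤ |∫ x in (0:ℝ)..π, Real.cos x ^ 2| := by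
    apply intervalIntegral.norm_integral_le_abs_of_norm_le
    · filter_upwards [ae_restrict_mem measurableSet_uIoc] with x _
      rw [Real.norm_eq_abs, abs_mul]
      calc |Real.cos (z * Real.sin x)| * |Real.cos x ^ 2|
          ≤ 1 * |Real.cos x ^ 2| :=
            mul_le_mul_of_nonneg_right (Real.abs_cos_le_one _) (abs_nonneg _)
        _ = Real.cos x ^ 2 := by rw [one_mul, abs_of_nonneg (sq_nonneg _)]
    · exact (Real.continuous_cos.pow 2).intervalIntegrable 0 π
  have hcos : ∫ x in (0:ℝ)..π, Real.cos x ^ 2 = π / 2 := by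
    rw [integral_cos_sq]; simp
  rw [hcos] at hb
  rw [Real.norm_eq_abs] at hb
  have habs : |(z/π) * ∫ x in (0:ℝ)..π, Real.cos (z * Real.sin x) * Real.cos x ^ 2|
      = (z/π) * |∫ x in (0:ℝ)..π, Real.cos (z * Real.sin x) * Real.cos x ^ 2| := by
    rw [abs_mul, abs_of_nonneg (div_nonneg hz Real.pi_pos.le)]
  rw [habs]
  calc (z/π) * |∫ x in (0:ℝ)..π, Real.cos (z * Real.sin x) * Real.cos x ^ 2|
      ≤ (z/π) * |π/2| := mul_le_mul_of_nonneg_left hb (div_nonneg hz Real.pi_pos.le)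
    _ = z / 2 := by
        rw [abs_of_nonneg (by positivity : (0:ℝ) ≤ π/2)]
        field_simp

lemma abs_J1_sqrt {u : ℝ} (hu : 0 ≤ u) : |J1 (2 * Real.sqrt u)| ≤ Real.sqrt u := by
  have := abs_J1_le (z := 2 * Real.sqrt u) (by positivity)
  linarith
lemma key_mono (x D : ℝ) (hD : 0 < D) {s t : ℝ} (hs : 0 < s) (hst : s ≤ t) :
    Real.sqrt s * Real.exp (-x^2/(4*D*s)) ≤ Real.sqrt t * Real.exp (-x^2/(4*D*t)) := by
  have ht : 0 < t := lt_of_lt_of_le hs hst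
  apply mul_le_mul (Real.sqrt_le_sqrt hst) (Real.exp_le_exp.mpr ?_) (Real.exp_pos _).le
    (Real.sqrt_nonneg _)
  rw [neg_div, neg_div, neg_le_neg_iff]
  gcongr
  all_goals first | positivity | linarith | exact sq_nonneg x

lemma H1_bd (D a ε β x : ℝ) (hD : 0 < D) (ha : 0 < a) (hε : 0 < ε) (hβ : 0 < β)
    (hab : a ≠ β*ε) {y t : ℝ} (hy : 0 < y) (hyt : y ≤ t) :
    |H1 D a ε β x y| * y ≤
      (Real.sqrt t * Real.exp (-x^2/(4*D*t)) / (2*Real.sqrt (π*D)))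
        * (Real.exp (-a*y) + ε*t*((Real.exp (-a*y)+Real.exp (-β*ε*y))/|a-β*ε|)) := by
  have ht : 0 < t := lt_of_lt_of_le hy hyt
  set N := Real.sqrt t * Real.exp (-x^2/(4*D*t)) with hN
  have hN0 : 0 < N := by positivity
  have hπD : (0:ℝ) < π*D := by positivity
  have hsqπD : (0:ℝ) < Real.sqrt (π*D) := Real.sqrt_pos.mpr hπD
  set T1 := Real.exp (-x^2/(4*D*y)) / (2 * Real.sqrt (π*D*y)) * Real.exp (-a*y) with hT1
  set F : ℝ → ℝ := fun s =>
      (Real.exp (-x^2/(4*D*s) - a*s) / Real.sqrt (y-s)) *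
      (Real.sqrt ε * Real.exp (-β*ε*(y-s)) / Real.sqrt (π*D)) *
      J1 (2 * Real.sqrt (ε*s*(y-s))) with hFdef
  set g : ℝ → ℝ := fun s => ε * N / Real.sqrt (π*D) * Real.exp (-(β*ε)*(y-s) - a*s) with hgdef
  -- pointwise bound on F
  have hptF : ∀ s ∈ Set.Ioc (0:ℝ) y, ‖F s‖ ≤ g s := by
    intro s hs
    obtain ⟨hs0, hsy⟩ := hs
    rcases eq_or_lt_of_le hsy with rfl | hlt
    · have : F s = 0 := by
        rw [hFdef]; simp
      rw [this]; simp only [norm_zero]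
      rw [hgdef]; positivity
    · have hys : 0 < y - s := by linarith
      have hsq : (0:ℝ) < Real.sqrt (y-s) := Real.sqrt_pos.mpr hys
      have hA : 0 ≤ Real.exp (-x^2/(4*D*s) - a*s) / Real.sqrt (y-s) := by positivity
      have hB : 0 ≤ Real.sqrt ε * Real.exp (-β*ε*(y-s)) / Real.sqrt (π*D) := by positivity
      have hJ : |J1 (2 * Real.sqrt (ε*s*(y-s)))| ≤ Real.sqrt (ε*s*(y-s)) :=
        abs_J1_sqrt (by positivity)
      have h1 : ‖F s‖ ≤ (Real.exp (-x^2/(4*D*s) - a*s) / Real.sqrt (y-s)) *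
          (Real.sqrt ε * Real.exp (-β*ε*(y-s)) / Real.sqrt (π*D)) * Real.sqrt (ε*s*(y-s)) := by
        rw [hFdef, Real.norm_eq_abs, abs_mul, abs_mul, abs_of_nonneg hA, abs_of_nonneg hB]
        exact mul_le_mul_of_nonneg_left hJ (mul_nonneg hA hB)
      refine h1.trans ?_
      have hsqrtR : Real.sqrt (ε*s*(y-s)) = Real.sqrt ε * Real.sqrt s * Real.sqrt (y-s) := by
        rw [Real.sqrt_mul (by positivity), Real.sqrt_mul hε.le]
      have hexp : Real.exp (-x^2/(4*D*s) - a*s) = Real.exp (-x^2/(4*D*s)) * Real.exp (-a*s) := by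
        rw [← Real.exp_add]; ring_nf
      have key : Real.sqrt s * Real.exp (-x^2/(4*D*s)) ≤ N :=
        key_mono x D hD hs0 (le_trans hsy hyt)
      have h2 : (Real.exp (-x^2/(4*D*s) - a*s) / Real.sqrt (y-s)) *
          (Real.sqrt ε * Real.exp (-β*ε*(y-s)) / Real.sqrt (π*D)) * Real.sqrt (ε*s*(y-s))
          = ε * (Real.sqrt s * Real.exp (-x^2/(4*D*s))) / Real.sqrt (π*D) *
            Real.exp (-(β*ε)*(y-s) - a*s) := by
        rw [hsqrtR, hexp]
        rw [show Real.exp (-(β*ε)*(y-s) - a*s)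
          = Real.exp (-β*ε*(y-s)) * Real.exp (-a*s) by rw [← Real.exp_add]; ring_nf]
        field_simp
        ring_nf
        rw [Real.sq_sqrt hε.le]
      rw [h2, hgdef]
      have hkey2 : ε * (Real.sqrt s * Real.exp (-x^2/(4*D*s))) ≤ ε * N :=
        mul_le_mul_of_nonneg_left key hε.le
      have hdiv : ε * (Real.sqrt s * Real.exp (-x^2/(4*D*s))) / Real.sqrt (π*D)
          ≤ ε * N / Real.sqrt (π*D) := by gcongr
      exact mul_le_mul_of_nonneg_right hdiv (Real.exp_pos _).le
  have hgint : IntervalIntegrable g volume 0 y := by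
    apply Continuous.intervalIntegrable; rw [hgdef]; fun_prop
  have hIoc : Set.uIoc (0:ℝ) y = Set.Ioc 0 y := Set.uIoc_of_le hy.le
  have hFbound : ‖∫ s in (0:ℝ)..y, F s‖ ≤ |∫ s in (0:ℝ)..y, g s| := by
    apply intervalIntegral.norm_integral_le_abs_of_norm_le _ hgint
    filter_upwards [ae_restrict_mem measurableSet_uIoc] with s hs
    exact hptF s (hIoc ▸ hs)
  set E := (Real.exp (-(β*ε)*y) - Real.exp (-a*y))/(a - β*ε) with hE
  have hgval : ∫ s in (0:ℝ)..y, g s = ε * N / Real.sqrt (π*D) * E := by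
    rw [hgdef, hE]
    rw [intervalIntegral.integral_const_mul, int_exp2 a (β*ε) y (Ne.symm hab)]
  have hEnonneg : 0 ≤ E := by
    rw [hE, ← int_exp2 a (β*ε) y (Ne.symm hab)]
    apply intervalIntegral.integral_nonneg hy.le
    intro s _; positivity
  have habs0 : 0 < |a - β*ε| := abs_pos.mpr (sub_ne_zero.mpr hab)
  have hexpeq : Real.exp (-(β*ε)*y) = Real.exp (-β*ε*y) := by ring_nf
  have hEle : E ≤ (Real.exp (-a*y) + Real.exp (-β*ε*y))/|a - β*ε| := by
    rw [← abs_of_nonneg hEnonneg, hE, abs_div]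
    have hnum : |Real.exp (-(β*ε)*y) - Real.exp (-a*y)|
        ≤ Real.exp (-a*y) + Real.exp (-β*ε*y) := by
      calc |Real.exp (-(β*ε)*y) - Real.exp (-a*y)|
          = |Real.exp (-(β*ε)*y) + -(Real.exp (-a*y))| := by ring_nf
        _ ≤ |Real.exp (-(β*ε)*y)| + |-(Real.exp (-a*y))| := abs_add_le _ _
        _ = Real.exp (-β*ε*y) + Real.exp (-a*y) := by
            rw [abs_neg, abs_of_pos (Real.exp_pos _), abs_of_pos (Real.exp_pos _), hexpeq]
        _ = Real.exp (-a*y) + Real.exp (-β*ε*y) := by ring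
    gcongr
  -- upper bound on |H1| itself
  have hT1nn : 0 ≤ T1 := by rw [hT1]; positivity
  have hH1 : |H1 D a ε β x y| ≤ T1 + (1/2) * |∫ s in (0:ℝ)..y, F s| := by
    have : H1 D a ε β x y = T1 - (1/2) * ∫ s in (0:ℝ)..y, F s := by
      rw [hT1, hFdef]; rfl
    rw [this]
    calc |T1 - (1/2) * ∫ s in (0:ℝ)..y, F s|
        = |T1 + -((1/2) * ∫ s in (0:ℝ)..y, F s)| := by rw [sub_eq_add_neg]
      _ ≤ |T1| + |-((1/2) * ∫ s in (0:ℝ)..y, F s)| := abs_add_le _ _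
      _ = T1 + (1/2) * |∫ s in (0:ℝ)..y, F s| := by
          rw [abs_neg, abs_of_nonneg hT1nn, abs_mul]
          norm_num
  -- piece 1
  have hsy2 : Real.sqrt (π*D*y) = Real.sqrt (π*D) * Real.sqrt y := Real.sqrt_mul hπD.le y
  have hsqy : (0:ℝ) < Real.sqrt y := Real.sqrt_pos.mpr hy
  have e1 : T1 * y = Real.sqrt y * Real.exp (-x^2/(4*D*y)) * Real.exp (-a*y)
      / (2*Real.sqrt (π*D)) := by
    rw [hT1, hsy2]
    field_simp
    ring_nf
    rw [Real.sq_sqrt hy.le]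
  have hp1 : T1 * y ≤ N * Real.exp (-a*y) / (2*Real.sqrt (π*D)) := by
    rw [e1]
    have := key_mono x D hD hy hyt
    gcongr
  -- piece 2
  have hp2pre : |∫ s in (0:ℝ)..y, F s| ≤ ε * N / Real.sqrt (π*D) * E := by
    have h0 : 0 ≤ ε * N / Real.sqrt (π*D) * E := by positivity
    calc |∫ s in (0:ℝ)..y, F s| ≤ |∫ s in (0:ℝ)..y, g s| := hFbound
      _ = ε * N / Real.sqrt (π*D) * E := by rw [hgval]; exact abs_of_nonneg h0
  have hp2 : (1/2) * |∫ s in (0:ℝ)..y, F s| * y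
      ≤ N / (2*Real.sqrt (π*D)) * (ε*t*((Real.exp (-a*y) + Real.exp (-β*ε*y))/|a - β*ε|)) := by
    calc (1/2) * |∫ s in (0:ℝ)..y, F s| * y
        ≤ (1/2) * (ε * N / Real.sqrt (π*D) * E) * y := by
          apply mul_le_mul_of_nonneg_right _ hy.le
          apply mul_le_mul_of_nonneg_left hp2pre (by norm_num)
      _ ≤ (1/2) * (ε * N / Real.sqrt (π*D) *
            ((Real.exp (-a*y) + Real.exp (-β*ε*y))/|a - β*ε|)) * t := by
          gcongr
      _ = N / (2*Real.sqrt (π*D)) * (ε*t*((Real.exp (-a*y) + Real.exp (-β*ε*y))/|a - β*ε|)) := by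
          ring
  -- assemble
  calc |H1 D a ε β x y| * y
      ≤ (T1 + (1/2) * |∫ s in (0:ℝ)..y, F s|) * y :=
        mul_le_mul_of_nonneg_right hH1 hy.le
    _ = T1 * y + (1/2) * |∫ s in (0:ℝ)..y, F s| * y := by ring
    _ ≤ N * Real.exp (-a*y) / (2*Real.sqrt (π*D))
          + N / (2*Real.sqrt (π*D)) * (ε*t*((Real.exp (-a*y) + Real.exp (-β*ε*y))/|a - β*ε|)) :=
        add_le_add hp1 hp2
    _ = Real.sqrt t * Real.exp (-x^2/(4*D*t)) / (2*Real.sqrt (π*D))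
        * (Real.exp (-a*y) + ε*t*((Real.exp (-a*y)+Real.exp (-β*ε*y))/|a-β*ε|)) := by
        rw [hN]; ring

theorem stmt2 (D a ε β δ d : ℝ) (hD : 0 < D) (ha : 0 < a) (hε : 0 < ε) (hβ : 0 < β) (hδ : 0 < δ) (hd : 0 < d)
    (h1 : a ≠ β*ε) (h2 : a ≠ δ*d) (h3 : β*ε ≠ δ*d) :
    ∀ x t : ℝ, 0 < t →
      |H2 D a ε β δ d x t| ≤
        (δ*t*Real.exp (-x^2/(4*D*t)) / (2 * Real.sqrt (π*D*t))) *
          (((Real.exp (-(δ*d)*t) - Real.exp (-a*t))/(a - δ*d)) * (1 + ε*t/|a - β*ε|)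
            + (ε*t/|a - β*ε|) * ((Real.exp (-(δ*d)*t) - Real.exp (-(β*ε)*t))/(β*ε - δ*d))) := by
  intro x t ht
  have hπD : (0:ℝ) < π*D := by positivity
  have hsqπD : (0:ℝ) < Real.sqrt (π*D) := Real.sqrt_pos.mpr hπD
  have habs0 : 0 < |a - β*ε| := abs_pos.mpr (sub_ne_zero.mpr h1)
  set M := Real.sqrt t * Real.exp (-x^2/(4*D*t)) / (2*Real.sqrt (π*D)) with hM
  have hM0 : 0 < M := by rw [hM]; positivity
  set A := |a - β*ε| with hA
  set g : ℝ → ℝ := fun y => δ * Real.exp (-δ*d*(t-y)) *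
      (M * (Real.exp (-a*y) + ε*t*((Real.exp (-a*y)+Real.exp (-β*ε*y))/A))) with hgdef
  have hgnn : ∀ y, 0 ≤ g y := by
    intro y; rw [hgdef]; positivity
  have hgint : IntervalIntegrable g volume 0 t := by
    apply Continuous.intervalIntegrable; rw [hgdef]; fun_prop
  have hIoc : Set.uIoc (0:ℝ) t = Set.Ioc 0 t := Set.uIoc_of_le ht.le
  -- pointwise bound
  have hpt : ∀ y ∈ Set.Ioc (0:ℝ) t,
      ‖H1 D a ε β x y * Real.exp (-δ*d*(t-y)) *
        Real.sqrt (δ*y/(t-y)) * J1 (2 * Real.sqrt (δ*y*(t-y)))‖ ≤ g y := by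
    intro y hy
    obtain ⟨hy0, hyt⟩ := hy
    rcases eq_or_lt_of_le hyt with rfl | hlt
    · have : H1 D a ε β x y * Real.exp (-δ*d*(y-y)) *
          Real.sqrt (δ*y/(y-y)) * J1 (2 * Real.sqrt (δ*y*(y-y))) = 0 := by
        rw [sub_self, div_zero, Real.sqrt_zero]
        ring
      rw [this, norm_zero]
      exact hgnn y
    · have hty : 0 < t - y := by linarith
      have hprod : Real.sqrt (δ*y/(t-y)) * Real.sqrt (δ*y*(t-y)) = δ*y := by
        have h1 : Real.sqrt (t-y) ≠ 0 := ne_of_gt (Real.sqrt_pos.mpr hty)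
        have hδy : Real.sqrt (δ*y) * Real.sqrt (δ*y) = δ*y := Real.mul_self_sqrt (by positivity)
        have e2 : Real.sqrt (δ*y*(t-y)) = Real.sqrt (δ*y) * Real.sqrt (t-y) :=
          Real.sqrt_mul (by positivity) _
        have e3 : Real.sqrt (δ*y/(t-y)) = Real.sqrt (δ*y) / Real.sqrt (t-y) :=
          Real.sqrt_div (by positivity) _
        rw [e2, e3]
        calc Real.sqrt (δ*y) / Real.sqrt (t-y) * (Real.sqrt (δ*y) * Real.sqrt (t-y))
            = (Real.sqrt (δ*y)*Real.sqrt (δ*y)) * (Real.sqrt (t-y)/Real.sqrt (t-y)) := by ring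
          _ = δ*y := by rw [hδy, div_self h1, mul_one]
      have hH1b := H1_bd D a ε β x hD ha hε hβ h1 hy0 hyt
      have e0 : ‖H1 D a ε β x y * Real.exp (-δ*d*(t-y)) *
          Real.sqrt (δ*y/(t-y)) * J1 (2 * Real.sqrt (δ*y*(t-y)))‖
          = |H1 D a ε β x y| * Real.exp (-δ*d*(t-y)) *
            Real.sqrt (δ*y/(t-y)) * |J1 (2 * Real.sqrt (δ*y*(t-y)))| := by
        rw [Real.norm_eq_abs, abs_mul, abs_mul, abs_mul,
          abs_of_pos (Real.exp_pos _), abs_of_nonneg (Real.sqrt_nonneg _)]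
      rw [e0]
      have hJ : |J1 (2 * Real.sqrt (δ*y*(t-y)))| ≤ Real.sqrt (δ*y*(t-y)) :=
        abs_J1_sqrt (by positivity)
      calc |H1 D a ε β x y| * Real.exp (-δ*d*(t-y)) *
            Real.sqrt (δ*y/(t-y)) * |J1 (2 * Real.sqrt (δ*y*(t-y)))|
          ≤ |H1 D a ε β x y| * Real.exp (-δ*d*(t-y)) *
            Real.sqrt (δ*y/(t-y)) * Real.sqrt (δ*y*(t-y)) := by
            apply mul_le_mul_of_nonneg_left hJ
            positivity
        _ = δ * Real.exp (-δ*d*(t-y)) * (|H1 D a ε β x y| * y) := by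
            rw [mul_assoc (|H1 D a ε β x y| * Real.exp (-δ*d*(t-y))), hprod]
            ring
        _ ≤ δ * Real.exp (-δ*d*(t-y)) *
            (M * (Real.exp (-a*y) + ε*t*((Real.exp (-a*y)+Real.exp (-β*ε*y))/A))) := by
            apply mul_le_mul_of_nonneg_left _ (by positivity)
            rw [hM, hA]
            exact hH1b
        _ = g y := by rw [hgdef]
  -- |H2| ≤ ∫ g
  have hH2 : |H2 D a ε β δ d x t| ≤ |∫ y in (0:ℝ)..t, g y| := by
    rw [H2, ← Real.norm_eq_abs]
    apply intervalIntegral.norm_integral_le_abs_of_norm_le _ hgint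
    filter_upwards [ae_restrict_mem measurableSet_uIoc] with y hy
    exact hpt y (hIoc ▸ hy)
  have hgintnn : 0 ≤ ∫ y in (0:ℝ)..t, g y :=
    intervalIntegral.integral_nonneg ht.le (fun y _ => hgnn y)
  rw [abs_of_nonneg hgintnn] at hH2
  -- compute ∫ g
  set c1 := δ * M * (1 + ε*t/A) with hc1
  set c2 := δ * M * (ε*t/A) with hc2
  set u1 : ℝ → ℝ := fun y => Real.exp (-(δ*d)*(t-y) - a*y) with hu1
  set u2 : ℝ → ℝ := fun y => Real.exp (-(δ*d)*(t-y) - (β*ε)*y) with hu2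
  have hgform : ∀ y, g y = c1 * u1 y + c2 * u2 y := by
    intro y
    have e1 : u1 y = Real.exp (-δ*d*(t-y)) * Real.exp (-a*y) := by
      rw [hu1, ← Real.exp_add]; ring_nf
    have e2 : u2 y = Real.exp (-δ*d*(t-y)) * Real.exp (-β*ε*y) := by
      rw [hu2, ← Real.exp_add]; ring_nf
    rw [e1, e2, hgdef, hc1, hc2]
    ring
  have hu1int : IntervalIntegrable u1 volume 0 t := by
    apply Continuous.intervalIntegrable; rw [hu1]; fun_prop
  have hu2int : IntervalIntegrable u2 volume 0 t := by
    apply Continuous.intervalIntegrable; rw [hu2]; fun_prop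
  have hgval : ∫ y in (0:ℝ)..t, g y
      = c1 * ((Real.exp (-(δ*d)*t) - Real.exp (-a*t))/(a - δ*d))
        + c2 * ((Real.exp (-(δ*d)*t) - Real.exp (-(β*ε)*t))/(β*ε - δ*d)) := by
    have : ∫ y in (0:ℝ)..t, g y = ∫ y in (0:ℝ)..t, (c1 * u1 y + c2 * u2 y) := by
      simp_rw [hgform]
    rw [this, intervalIntegral.integral_add ((hu1int.const_mul c1)) ((hu2int.const_mul c2)),
      intervalIntegral.integral_const_mul, intervalIntegral.integral_const_mul,
      int_exp2 a (δ*d) t (Ne.symm h2), int_exp2 (β*ε) (δ*d) t (Ne.symm h3)]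
  -- coefficient identity
  have hcoef : δ*t*Real.exp (-x^2/(4*D*t)) / (2 * Real.sqrt (π*D*t)) = δ * M := by
    rw [hM, Real.sqrt_mul hπD.le]
    rw [show Real.sqrt t = t / Real.sqrt t from (Real.div_sqrt).symm]
    have hst : Real.sqrt t ≠ 0 := ne_of_gt (Real.sqrt_pos.mpr ht)
    field_simp
    ring_nf
    rw [Real.sq_sqrt ht.le]
  rw [hcoef]
  refine hH2.trans (le_of_eq ?_)
  rw [hgval, hc1, hc2, hA]
  ring
end

section
/- For all real p, r and all t > 0, ∫_0^t e^{−p(t−y)} e^{−ry} √(y/(t−y)) dy = (πt/2) · e^{−((r+p)/2)t} · [ I₀(((r−p)/2)t) − I₁(((r−p)/2)t) ]. -/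
open Real MeasureTheory Set

/-! ### Auxiliary lemmas -/

lemma aux_cos_pow_even (k : ℕ) :
    ∫ x in (0:ℝ)..π, cos x ^ (2*k) = π * (2*k).factorial / (4^k * ((k.factorial):ℝ)^2) := by
  induction k with
  | zero => simp
  | succ n ih =>
    have h : 2*(n+1) = 2*n + 2 := by ring
    rw [h, integral_cos_pow, ih]
    simp [Real.sin_pi]
    push_cast [Nat.factorial_succ]
    have h4 : (4:ℝ)^n ≠ 0 := by positivity
    have hf : ((n.factorial:ℝ)) ≠ 0 := by positivity
    field_simp
    ring

lemma aux_cos_pow_odd (k : ℕ) :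
    ∫ x in (0:ℝ)..π, cos x ^ (2*k+1) = 0 := by
  induction k with
  | zero => simp
  | succ n ih =>
    have h : 2*(n+1)+1 = (2*n+1) + 2 := by ring
    rw [h, integral_cos_pow, ih]
    simp [Real.sin_pi]

lemma aux_hasSum_exp (u : ℝ) : HasSum (fun n => u^n / (n.factorial:ℝ)) (Real.exp u) := by
  rw [Real.exp_eq_exp_ℝ]
  exact NormedSpace.expSeries_div_hasSum_exp u

lemma aux_interchange (g : ℝ → ℝ) (hg : Continuous g) (z : ℝ) :
    ∫ x in (0:ℝ)..π, g x * Real.exp (z * Real.cos x)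
      = ∑' n : ℕ, (z^n / (n.factorial:ℝ)) * ∫ x in (0:ℝ)..π, g x * (Real.cos x)^n := by
  have hpi : (0:ℝ) ≤ π := Real.pi_pos.le
  obtain ⟨C, hC, hCb⟩ : ∃ C, 0 < C ∧ ∀ x ∈ Set.Ioc (0:ℝ) π, |g x| ≤ C := by
    obtain ⟨C, hCb⟩ := (isCompact_Icc.image hg).isBounded.subset_closedBall 0
    refine ⟨|C|+1, by positivity, fun x hx => ?_⟩
    have := hCb ⟨x, Set.mem_Icc.mpr ⟨hx.1.le, hx.2⟩, rfl⟩
    simp only [Metric.mem_closedBall, Real.dist_eq, sub_zero] at this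
    calc |g x| ≤ C := this
      _ ≤ |C| + 1 := by cases abs_cases C <;> linarith
  set F : ℕ → ℝ → ℝ := fun n x => g x * ((z * Real.cos x)^n / (n.factorial:ℝ)) with hF
  have hFc : ∀ n, Continuous (F n) := by intro n; fun_prop
  have hFint : ∀ n, Integrable (F n) (volume.restrict (Set.Ioc (0:ℝ) π)) := fun n =>
    (hFc n).integrableOn_Ioc
  have hptbd : ∀ n, ∀ x ∈ Set.Ioc (0:ℝ) π, ‖F n x‖ ≤ C * (|z|^n / (n.factorial:ℝ)) := by
    intro n x hx
    have h1 : |(z * Real.cos x)^n| ≤ |z|^n := by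
      rw [abs_pow, abs_mul]
      apply pow_le_pow_left₀ (by positivity)
      calc |z| * |Real.cos x| ≤ |z| * 1 :=
        mul_le_mul_of_nonneg_left (Real.abs_cos_le_one x) (abs_nonneg z)
      _ = |z| := mul_one _
    have heq : ‖F n x‖ = |g x| * (|(z * Real.cos x)^n| / (n.factorial:ℝ)) := by
      simp [hF, Real.norm_eq_abs, abs_mul, abs_div, Nat.abs_cast]
    rw [heq]
    have hfn : (0:ℝ) < (n.factorial:ℝ) := by positivity
    exact mul_le_mul (hCb x hx) (div_le_div_of_nonneg_right h1 hfn.le)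
      (by positivity) hC.le
  have hbound : ∀ n, (∫ x in Set.Ioc (0:ℝ) π, ‖F n x‖)
      ≤ (C * (|z|^n / (n.factorial:ℝ))) * π := by
    intro n
    calc (∫ x in Set.Ioc (0:ℝ) π, ‖F n x‖)
        ≤ ∫ _x in Set.Ioc (0:ℝ) π, C * (|z|^n / (n.factorial:ℝ)) := by
          apply setIntegral_mono_on (hFint n).norm (integrableOn_const (by
            simp [Real.volume_Ioc])) measurableSet_Ioc
          exact hptbd n
      _ = (C * (|z|^n / (n.factorial:ℝ))) * π := by
          simp [Real.volume_Ioc, ENNReal.toReal_ofReal hpi, max_eq_left hpi]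
          ring
  have hsum : Summable fun n => ∫ x in Set.Ioc (0:ℝ) π, ‖F n x‖ := by
    apply Summable.of_nonneg_of_le
      (fun n => integral_nonneg (fun x => norm_nonneg _)) hbound
    exact (((aux_hasSum_exp |z|).summable.mul_left C).mul_right π)
  have key := MeasureTheory.integral_tsum_of_summable_integral_norm hFint hsum
  have hts : ∀ x : ℝ, (∑' n, F n x) = g x * Real.exp (z * Real.cos x) := by
    intro x
    exact ((aux_hasSum_exp (z * Real.cos x)).mul_left (g x)).tsum_eq
  rw [intervalIntegral.integral_of_le hpi]
  simp_rw [← hts]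
  rw [← key]
  congr 1
  funext n
  rw [← intervalIntegral.integral_of_le hpi]
  rw [← intervalIntegral.integral_const_mul]
  congr 1
  funext x
  simp only [hF, mul_pow]
  ring

lemma aux_two_pow_two (k : ℕ) : (2:ℝ)^(2*k) = 4^k := by
  rw [pow_mul]; norm_num

lemma besselI0_rep (z : ℝ) :
    ∫ x in (0:ℝ)..π, Real.exp (z * Real.cos x) = π * I0 z := by
  have h := aux_interchange (fun _ => 1) continuous_const z
  simp only [one_mul] at h
  rw [h]
  have hsupp : Function.support (fun n : ℕ => (z^n / (n.factorial:ℝ)) * ∫ x in (0:ℝ)..π, (Real.cos x)^n)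
      ⊆ Set.range (fun k : ℕ => 2*k) := by
    intro n hn
    rcases Nat.even_or_odd n with ⟨k, hk⟩ | ⟨k, hk⟩
    · exact ⟨k, show _ = _ by dsimp only; omega⟩
    · exfalso; apply hn; subst hk; dsimp only; rw [aux_cos_pow_odd]; ring
  rw [← Function.Injective.tsum_eq (fun a b h => by omega) hsupp]
  rw [I0, ← tsum_mul_left]
  congr 1; funext k
  rw [aux_cos_pow_even k]
  have h1 : ((2*k).factorial : ℝ) ≠ 0 := by positivity
  have h2 : ((k.factorial : ℝ)) ≠ 0 := by positivity
  have h3 : (z/2)^(2*k) = z^(2*k) / 4^k := by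
    rw [div_pow, aux_two_pow_two]
  rw [h3]
  field_simp

lemma besselI1_rep (z : ℝ) :
    ∫ x in (0:ℝ)..π, Real.cos x * Real.exp (z * Real.cos x) = π * I1 z := by
  have h := aux_interchange Real.cos Real.continuous_cos z
  rw [h]
  have hre : ∀ n : ℕ, (∫ x in (0:ℝ)..π, Real.cos x * (Real.cos x)^n) = ∫ x in (0:ℝ)..π, (Real.cos x)^(n+1) := by
    intro n; congr 1; funext x; rw [pow_succ]; ring
  have hsupp : Function.support (fun n : ℕ => (z^n / (n.factorial:ℝ)) * ∫ x in (0:ℝ)..π, Real.cos x * (Real.cos x)^n)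
      ⊆ Set.range (fun k : ℕ => 2*k+1) := by
    intro n hn
    rcases Nat.even_or_odd n with ⟨k, hk⟩ | ⟨k, hk⟩
    · exfalso; apply hn
      subst hk
      dsimp only
      rw [hre, show k+k+1 = 2*k+1 by omega, aux_cos_pow_odd]; ring
    · exact ⟨k, show _ = _ by dsimp only; omega⟩
  rw [← Function.Injective.tsum_eq (fun a b h => by omega) hsupp]
  rw [I1, ← tsum_mul_left]
  congr 1; funext k
  rw [hre, show (2*k+1)+1 = 2*(k+1) by ring, aux_cos_pow_even (k+1)]
  have h1 : ((2*(k+1)).factorial : ℝ) ≠ 0 := by positivity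
  have h2 : ((k.factorial : ℝ)) ≠ 0 := by positivity
  have h2' : (((k+1).factorial : ℝ)) ≠ 0 := by positivity
  have h3 : ((2*k+1).factorial : ℝ) ≠ 0 := by positivity
  have h4 : (z/2)^(2*k+1) = z^(2*k+1) / (2*4^k) := by
    have h2p : (2:ℝ)^(2*k+1) = 2*4^k := by rw [pow_succ, aux_two_pow_two]; ring
    rw [div_pow, h2p]
  have h5 : ((2*(k+1)).factorial : ℝ) = (2*k+2) * ((2*k+1).factorial:ℝ) := by
    rw [show 2*(k+1) = (2*k+1)+1 by ring, Nat.factorial_succ]; push_cast; ring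
  have h6 : (((k+1).factorial : ℝ)) = (k+1) * (k.factorial:ℝ) := by
    rw [Nat.factorial_succ]; push_cast; ring
  rw [h4, h5, h6]
  field_simp
  ring

lemma image_sinsq (t : ℝ) (ht : 0 < t) :
    (fun θ : ℝ => t * Real.sin θ ^ 2) '' Set.Ioo 0 (π/2) = Set.Ioo 0 t := by
  ext y
  constructor
  · rintro ⟨θ, hθ, rfl⟩
    obtain ⟨h1, h2⟩ := hθ
    have hs : 0 < Real.sin θ := Real.sin_pos_of_pos_of_lt_pi h1 (h2.trans (by linarith [Real.pi_pos]))
    have hc : 0 < Real.cos θ := Real.cos_pos_of_mem_Ioo ⟨by linarith [Real.pi_pos], h2⟩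
    have hpyth := Real.sin_sq_add_cos_sq θ
    constructor
    · positivity
    · show t * Real.sin θ ^ 2 < t
      nlinarith [mul_pos hc hc]
  · rintro ⟨h1, h2⟩
    have hdt : 0 < y / t := by positivity
    have hlt : y / t < 1 := by rw [div_lt_one ht]; exact h2
    refine ⟨Real.arcsin (Real.sqrt (y/t)), ⟨?_, ?_⟩, ?_⟩
    · apply Real.arcsin_pos.mpr; positivity
    · apply Real.arcsin_lt_pi_div_two.mpr
      calc Real.sqrt (y/t) < Real.sqrt 1 := Real.sqrt_lt_sqrt hdt.le hlt
        _ = 1 := Real.sqrt_one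
    · show t * Real.sin (Real.arcsin (Real.sqrt (y/t))) ^ 2 = y
      rw [Real.sin_arcsin (by linarith [Real.sqrt_nonneg (y/t)])
        (by calc Real.sqrt (y/t) ≤ Real.sqrt 1 := Real.sqrt_le_sqrt hlt.le
              _ = 1 := Real.sqrt_one)]
      rw [Real.sq_sqrt hdt.le]
      field_simp

lemma injOn_sinsq (t : ℝ) (ht : 0 < t) :
    Set.InjOn (fun θ : ℝ => t * Real.sin θ ^ 2) (Set.Ioo 0 (π/2)) := by
  intro a ha b hb hab
  have hsa : 0 ≤ Real.sin a := Real.sin_nonneg_of_nonneg_of_le_pi ha.1.le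
    (ha.2.le.trans (by linarith [Real.pi_pos]))
  have hsb : 0 ≤ Real.sin b := Real.sin_nonneg_of_nonneg_of_le_pi hb.1.le
    (hb.2.le.trans (by linarith [Real.pi_pos]))
  have h2 : Real.sin a ^ 2 = Real.sin b ^ 2 := by
    have h := hab; dsimp only at h
    exact mul_left_cancel₀ ht.ne' h
  have h3 : Real.sin a = Real.sin b := by nlinarith
  exact Real.injOn_sin ⟨by linarith [ha.1, Real.pi_pos], ha.2.le⟩
    ⟨by linarith [hb.1, Real.pi_pos], hb.2.le⟩ h3

lemma cov_step (p r t : ℝ) (ht : 0 < t) :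
    ∫ y in (0:ℝ)..t, Real.exp (-p*(t-y)) * Real.exp (-r*y) * Real.sqrt (y/(t-y))
      = (t * Real.exp (-((r+p)/2)*t)) *
        ∫ θ in (0:ℝ)..(π/2), (1 - Real.cos (2*θ)) * Real.exp ((((r-p)/2)*t) * Real.cos (2*θ)) := by
  set z := ((r-p)/2)*t with hz
  have hpi2 : (0:ℝ) ≤ π/2 := by positivity
  have hderiv : ∀ θ : ℝ, HasDerivAt (fun θ => t * Real.sin θ ^ 2)
      (t * (2 * Real.sin θ * Real.cos θ)) θ := by
    intro θ
    have h := ((Real.hasDerivAt_sin θ).fun_pow 2).const_mul t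
    refine h.congr_deriv ?_
    simp
  rw [intervalIntegral.integral_of_le ht.le, MeasureTheory.integral_Ioc_eq_integral_Ioo]
  rw [← image_sinsq t ht]
  rw [MeasureTheory.integral_image_eq_integral_abs_deriv_smul measurableSet_Ioo
    (fun θ _ => (hderiv θ).hasDerivWithinAt) (injOn_sinsq t ht)]
  have hcongr : Set.EqOn
      (fun θ => |t * (2 * Real.sin θ * Real.cos θ)| •
        (Real.exp (-p*(t - t * Real.sin θ ^ 2)) * Real.exp (-r*(t * Real.sin θ ^ 2)) *
         Real.sqrt ((t * Real.sin θ ^ 2)/(t - t * Real.sin θ ^ 2))))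
      (fun θ => (t * Real.exp (-((r+p)/2)*t)) *
        ((1 - Real.cos (2*θ)) * Real.exp (z * Real.cos (2*θ))))
      (Set.Ioo 0 (π/2)) := by
    intro θ hθ
    obtain ⟨h1, h2⟩ := hθ
    have hs : 0 < Real.sin θ := Real.sin_pos_of_pos_of_lt_pi h1 (h2.trans (by linarith [Real.pi_pos]))
    have hc : 0 < Real.cos θ := Real.cos_pos_of_mem_Ioo ⟨by linarith [Real.pi_pos], h2⟩
    have hpyth := Real.sin_sq_add_cos_sq θ
    have hsub : t - t * Real.sin θ ^ 2 = t * Real.cos θ ^ 2 := by nlinarith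
    have hcos2 : Real.cos (2*θ) = 1 - 2 * Real.sin θ ^ 2 := by
      rw [Real.cos_two_mul]; linarith
    have hsqrt : Real.sqrt ((t * Real.sin θ ^ 2)/(t * Real.cos θ ^ 2))
        = Real.sin θ / Real.cos θ := by
      rw [show (t * Real.sin θ ^ 2)/(t * Real.cos θ ^ 2) = (Real.sin θ / Real.cos θ)^2 by
        field_simp]
      exact Real.sqrt_sq (by positivity)
    have hexp : Real.exp (-p*(t * Real.cos θ ^ 2)) * Real.exp (-r*(t * Real.sin θ ^ 2))
        = Real.exp (-((r+p)/2)*t) * Real.exp (z * (1 - 2 * Real.sin θ ^ 2)) := by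
      rw [← Real.exp_add, ← Real.exp_add]
      congr 1
      rw [hz]
      linear_combination (-(p*t)) * hpyth
    show |t * (2 * Real.sin θ * Real.cos θ)| •
        (Real.exp (-p*(t - t * Real.sin θ ^ 2)) * Real.exp (-r*(t * Real.sin θ ^ 2)) *
         Real.sqrt ((t * Real.sin θ ^ 2)/(t - t * Real.sin θ ^ 2)))
      = (t * Real.exp (-((r+p)/2)*t)) * ((1 - Real.cos (2*θ)) * Real.exp (z * Real.cos (2*θ)))
    rw [hsub, hsqrt, hcos2, smul_eq_mul, abs_of_pos (by positivity)]
    calc (t * (2 * Real.sin θ * Real.cos θ)) *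
          (Real.exp (-p*(t * Real.cos θ ^ 2)) * Real.exp (-r*(t * Real.sin θ ^ 2)) *
            (Real.sin θ / Real.cos θ))
        = (2 * t * Real.sin θ ^ 2) *
            (Real.exp (-p*(t * Real.cos θ ^ 2)) * Real.exp (-r*(t * Real.sin θ ^ 2))) := by
          field_simp
          all_goals ring
      _ = (2 * t * Real.sin θ ^ 2) *
            (Real.exp (-((r+p)/2)*t) * Real.exp (z * (1 - 2 * Real.sin θ ^ 2))) := by
          rw [hexp]
      _ = (t * Real.exp (-((r+p)/2)*t)) *
            ((1 - (1 - 2 * Real.sin θ ^ 2)) * Real.exp (z * (1 - 2 * Real.sin θ ^ 2))) := by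
          ring
  rw [MeasureTheory.setIntegral_congr_fun measurableSet_Ioo hcongr]
  rw [← MeasureTheory.integral_Ioc_eq_integral_Ioo, ← intervalIntegral.integral_of_le hpi2]
  rw [intervalIntegral.integral_const_mul]

theorem stmt4 (p r t : ℝ) (ht : 0 < t) :
    ∫ y in (0:ℝ)..t, Real.exp (-p*(t-y)) * Real.exp (-r*y) * Real.sqrt (y/(t-y)) =
      (π*t/2) * Real.exp (-((r+p)/2)*t) * (I0 (((r-p)/2)*t) - I1 (((r-p)/2)*t)) := by
  set z := ((r-p)/2)*t with hz
  rw [cov_step p r t ht]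
  have hcomp : (∫ θ in (0:ℝ)..(π/2), (1 - Real.cos (2*θ)) * Real.exp (z * Real.cos (2*θ)))
      = (2:ℝ)⁻¹ * ∫ φ in (0:ℝ)..π, (1 - Real.cos φ) * Real.exp (z * Real.cos φ) := by
    have h := intervalIntegral.integral_comp_mul_left (a := (0:ℝ)) (b := π/2)
      (fun φ => (1 - Real.cos φ) * Real.exp (z * Real.cos φ)) (c := (2:ℝ))
    simp only [mul_zero, smul_eq_mul] at h
    rw [show (2:ℝ)*(π/2) = π by ring] at h
    exact h two_ne_zero
  have hsplit : (∫ φ in (0:ℝ)..π, (1 - Real.cos φ) * Real.exp (z * Real.cos φ))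
      = (∫ φ in (0:ℝ)..π, Real.exp (z * Real.cos φ))
        - ∫ φ in (0:ℝ)..π, Real.cos φ * Real.exp (z * Real.cos φ) := by
    rw [← intervalIntegral.integral_sub
      ((by fun_prop : Continuous fun φ : ℝ => Real.exp (z * Real.cos φ)).intervalIntegrable 0 π)
      ((by fun_prop : Continuous fun φ : ℝ => Real.cos φ * Real.exp (z * Real.cos φ)).intervalIntegrable 0 π)]
    congr 1
    funext φ
    ring
  rw [hcomp, hsplit, besselI0_rep, besselI1_rep]
  ring
end

section
/- For every real s and every b > 0, ∫_0^{2b} e^{−sy} (b − y)/√(2by − y²) dy = π b e^{−sb} I₁(sb). -/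
open Real MeasureTheory Set

open intervalIntegral in
-- cos power recursion on [0, π]
lemma cos_pow_rec (n : ℕ) : (∫ θ in (0:ℝ)..π, Real.cos θ ^ (n+2)) =
    (n+1)/(n+2) * ∫ θ in (0:ℝ)..π, Real.cos θ ^ n := by
  rw [integral_cos_pow]
  simp [Real.sin_pi]

lemma cos_pow_even (k : ℕ) : (∫ θ in (0:ℝ)..π, Real.cos θ ^ (2*k)) =
    π * (2*k).factorial / (4^k * ((k.factorial : ℝ))^2) := by
  induction k with
  | zero => simp
  | succ k ih =>
    have h2 : 2*(k+1) = 2*k + 2 := by ring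
    rw [h2, cos_pow_rec, ih]
    have h3 : (2*k+2).factorial = (2*k+2) * ((2*k+1) * (2*k).factorial) := by
      rw [Nat.factorial_succ, Nat.factorial_succ]
    have h4 : (k+1).factorial = (k+1) * k.factorial := Nat.factorial_succ k
    rw [h3, h4]
    have hf : ((2*k).factorial : ℝ) ≠ 0 := Nat.cast_ne_zero.2 (Nat.factorial_ne_zero _)
    have hk : ((k.factorial : ℝ)) ≠ 0 := Nat.cast_ne_zero.2 (Nat.factorial_ne_zero _)
    have h4k : (4:ℝ)^k ≠ 0 := by positivity
    push_cast
    field_simp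
    ring

lemma cos_pow_odd (k : ℕ) : (∫ θ in (0:ℝ)..π, Real.cos θ ^ (2*k+1)) = 0 := by
  induction k with
  | zero => simp
  | succ k ih =>
    have h2 : 2*(k+1)+1 = (2*k+1) + 2 := by ring
    rw [h2, cos_pow_rec, ih, mul_zero]

open intervalIntegral in
lemma cos_sin_sq (n : ℕ) : (∫ θ in (0:ℝ)..π, Real.cos θ ^ n * Real.sin θ ^ 2) =
    (∫ θ in (0:ℝ)..π, Real.cos θ ^ n) / (n+2) := by
  have h1 : ∀ θ : ℝ, Real.cos θ ^ n * Real.sin θ ^ 2 = Real.cos θ ^ n - Real.cos θ ^ (n+2) := by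
    intro θ; rw [Real.sin_sq]; ring
  simp_rw [h1]
  rw [intervalIntegral.integral_sub (f := fun θ => Real.cos θ ^ n) (g := fun θ => Real.cos θ ^ (n+2)) ((Real.continuous_cos.pow n).intervalIntegrable 0 π)
    ((Real.continuous_cos.pow (n+2)).intervalIntegrable 0 π), cos_pow_rec]
  have : ((n:ℝ)+2) ≠ 0 := by positivity
  field_simp
  ring

lemma swap_lemma (c : ℝ) : (∫ θ in (0:ℝ)..π, Real.exp (c * Real.cos θ) * Real.sin θ ^ 2) =
    ∑' n : ℕ, c^n / (n.factorial : ℝ) * ∫ θ in (0:ℝ)..π, Real.cos θ ^ n * Real.sin θ ^ 2 := by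
  set F : ℕ → ℝ → ℝ := fun n θ => c^n / (n.factorial : ℝ) * (Real.cos θ ^ n * Real.sin θ ^ 2)
    with hF
  have hcont : ∀ n, Continuous (F n) := by intro n; rw [hF]; fun_prop
  have hInt : ∀ n : ℕ, Integrable (F n) (volume.restrict (Ioc (0:ℝ) π)) := fun n =>
    (hcont n).integrableOn_Ioc
  have hbd : ∀ n : ℕ, ∀ θ : ℝ, ‖F n θ‖ ≤ |c|^n / (n.factorial : ℝ) := by
    intro n θ
    rw [hF]
    simp only [norm_mul, norm_div, norm_pow, Real.norm_eq_abs]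
    have h1 : |Real.cos θ| ^ n * |Real.sin θ| ^ 2 ≤ 1 := by
      have := pow_le_one₀ (abs_nonneg (Real.cos θ)) (Real.abs_cos_le_one θ) (n := n)
      have := pow_le_one₀ (abs_nonneg (Real.sin θ)) (Real.abs_sin_le_one θ) (n := 2)
      nlinarith [pow_nonneg (abs_nonneg (Real.cos θ)) n, pow_nonneg (abs_nonneg (Real.sin θ)) 2]
    calc |c|^n / |(n.factorial : ℝ)| * (|Real.cos θ|^n * |Real.sin θ|^2)
        ≤ |c|^n / |(n.factorial : ℝ)| * 1 := by
          apply mul_le_mul_of_nonneg_left h1; positivity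
      _ = |c|^n / (n.factorial : ℝ) := by
          rw [mul_one, abs_of_nonneg (by positivity : (0:ℝ) ≤ (n.factorial : ℝ))]
  have hsum : Summable (fun n : ℕ => ∫ θ in Ioc (0:ℝ) π, ‖F n θ‖) := by
    apply Summable.of_nonneg_of_le (fun n => integral_nonneg (fun θ => norm_nonneg _))
      (fun n => ?_) ((Real.summable_pow_div_factorial |c|).mul_right π)
    calc (∫ θ in Ioc (0:ℝ) π, ‖F n θ‖)
        ≤ ∫ _ in Ioc (0:ℝ) π, |c|^n / (n.factorial : ℝ) := by
          apply setIntegral_mono ((hInt n).norm) (integrable_const _)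
          intro θ; exact hbd n θ
      _ = |c|^n / (n.factorial : ℝ) * π := by
          rw [setIntegral_const]; simp [Real.volume_Ioc, Real.pi_pos.le, smul_eq_mul, mul_comm]
  have key := MeasureTheory.integral_tsum_of_summable_integral_norm hInt hsum
  have hL : (∫ θ in (0:ℝ)..π, Real.exp (c * Real.cos θ) * Real.sin θ ^ 2) =
      ∫ θ in Ioc (0:ℝ) π, ∑' n : ℕ, F n θ := by
    rw [intervalIntegral.integral_of_le Real.pi_pos.le]
    apply setIntegral_congr_fun measurableSet_Ioc
    intro θ _
    simp only []
    show Real.exp (c * Real.cos θ) * Real.sin θ ^ 2 = ∑' n : ℕ, F n θ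
    have hexp : Real.exp (c * Real.cos θ) = ∑' n : ℕ, (c * Real.cos θ)^n / (n.factorial : ℝ) := by
      rw [Real.exp_eq_exp_ℝ, NormedSpace.exp_eq_tsum_div]
    rw [hexp, ← tsum_mul_right]
    apply tsum_congr
    intro n
    rw [hF]
    simp only [mul_pow]
    ring
  rw [hL, ← key]
  apply tsum_congr
  intro n
  rw [hF, intervalIntegral.integral_of_le Real.pi_pos.le, ← integral_const_mul]

open intervalIntegral in
lemma subst_lemma (s b : ℝ) (hb : 0 < b) :
    (∫ y in (0:ℝ)..(2*b), Real.exp (-s*y) * Real.sqrt (2*b*y - y^2)) =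
    b^2 * Real.exp (-s*b) * ∫ θ in (0:ℝ)..π, Real.exp (s*b*Real.cos θ) * Real.sin θ ^ 2 := by
  set f : ℝ → ℝ := fun θ => b - b * Real.cos θ with hf
  set g : ℝ → ℝ := fun y => Real.exp (-s*y) * Real.sqrt (2*b*y - y^2) with hg
  have hderiv : ∀ x ∈ uIcc (0:ℝ) π, HasDerivAt f (b * Real.sin x) x := by
    intro x _
    have := ((Real.hasDerivAt_cos x).const_mul b).const_sub b
    simpa [mul_comm] using this
  have hg_cont : Continuous g := by
    rw [hg]; exact (Real.continuous_exp.comp (by fun_prop)).mul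
      (Real.continuous_sqrt.comp (by fun_prop))
  have key := intervalIntegral.integral_comp_smul_deriv hderiv
    (by fun_prop : Continuous (fun x => b * Real.sin x)).continuousOn hg_cont
  have hf0 : f 0 = 0 := by simp [hf]
  have hfπ : f π = 2*b := by simp [hf]; ring
  rw [hf0, hfπ] at key
  rw [← key]
  have hptwise : ∀ θ ∈ uIcc (0:ℝ) π,
      (b * Real.sin θ) • (g ∘ f) θ =
      b^2 * Real.exp (-s*b) * (Real.exp (s*b*Real.cos θ) * Real.sin θ ^ 2) := by
    intro θ hθ
    rw [uIcc_of_le Real.pi_pos.le] at hθ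
    have hs : 0 ≤ Real.sin θ := Real.sin_nonneg_of_nonneg_of_le_pi hθ.1 hθ.2
    have h1 : 2*b*(f θ) - (f θ)^2 = (b * Real.sin θ)^2 := by
      have h0 := Real.sin_sq_add_cos_sq θ
      rw [hf]; simp only []; linear_combination (-(b^2)) * h0
    have h2 : Real.sqrt (2*b*(f θ) - (f θ)^2) = b * Real.sin θ := by
      rw [h1, Real.sqrt_sq (by positivity)]
    have h3 : Real.exp (-s * (f θ)) = Real.exp (-s*b) * Real.exp (s*b*Real.cos θ) := by
      rw [← Real.exp_add]; congr 1; rw [hf]; ring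
    show (b * Real.sin θ) * (Real.exp (-s * (f θ)) * Real.sqrt (2*b*(f θ) - (f θ)^2)) = _
    rw [h2, h3]; ring
  rw [intervalIntegral.integral_congr hptwise, intervalIntegral.integral_const_mul]

open intervalIntegral in
lemma intble (s b : ℝ) (hb : 0 < b) :
    IntervalIntegrable (fun y => Real.exp (-s*y) * (b - y) / Real.sqrt (2*b*y - y^2))
      volume 0 (2*b) := by
  have h2b : (0:ℝ) ≤ 2*b := by linarith
  rw [intervalIntegrable_iff_integrableOn_Ioc_of_le h2b]
  set C : ℝ := Real.exp (2 * |s| * b) * Real.sqrt b with hC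
  set g : ℝ → ℝ := fun y => C * (y ^ (-(1:ℝ)/2) + (2*b - y) ^ (-(1:ℝ)/2)) with hg
  have hgint : IntegrableOn g (Ioc 0 (2*b)) volume := by
    have h1 : IntervalIntegrable (fun y : ℝ => y ^ (-(1:ℝ)/2)) volume 0 (2*b) :=
      intervalIntegral.intervalIntegrable_rpow' (by norm_num)
    have h2 : IntervalIntegrable (fun y : ℝ => (2*b - y) ^ (-(1:ℝ)/2)) volume 0 (2*b) := by
      have := (h1.comp_sub_left (2*b)).symm
      simpa using this
    have h3 := (h1.add h2).const_mul C
    rw [intervalIntegrable_iff_integrableOn_Ioc_of_le h2b] at h3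
    exact h3
  have hmeas : AEStronglyMeasurable (fun y => Real.exp (-s*y) * (b - y) / Real.sqrt (2*b*y - y^2))
      (volume.restrict (Ioc 0 (2*b))) := by
    apply Measurable.aestronglyMeasurable
    fun_prop
  apply Integrable.mono hgint hmeas
  rw [ae_restrict_iff' measurableSet_Ioc]
  apply ae_of_all
  intro y hy
  have hy0 : 0 < y := hy.1
  have hy2b : y ≤ 2*b := hy.2
  have hsqy : 0 < Real.sqrt y := Real.sqrt_pos.2 hy0
  have hsqb : 0 < Real.sqrt b := Real.sqrt_pos.2 hb
  have hneg : (-(1:ℝ)/2) = -(1/2 : ℝ) := by norm_num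
  have hrpow1 : y ^ (-(1:ℝ)/2) = 1 / Real.sqrt y := by
    rw [hneg, Real.rpow_neg hy0.le, ← Real.sqrt_eq_rpow, one_div]
  have hrpow2 : (2*b - y) ^ (-(1:ℝ)/2) = 1 / Real.sqrt (2*b - y) := by
    rw [hneg, Real.rpow_neg (by linarith), ← Real.sqrt_eq_rpow, one_div]
  have hexp : Real.exp (-s*y) ≤ Real.exp (2 * |s| * b) := by
    apply Real.exp_le_exp.2
    have h1 : -s*y ≤ |s| * y := mul_le_mul_of_nonneg_right (neg_le_abs s) hy0.le
    have h2 : |s| * y ≤ |s| * (2*b) := mul_le_mul_of_nonneg_left hy2b (abs_nonneg s)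
    have h3 : |s| * (2*b) = 2 * |s| * b := by ring
    linarith
  have habs : |b - y| ≤ b := by
    rw [abs_le]; constructor <;> linarith
  have hmain : ‖Real.exp (-s*y) * (b - y) / Real.sqrt (2*b*y - y^2)‖ ≤ g y := by
    rcases eq_or_lt_of_le hy2b with h2 | h2
    · have hz : 2*b*y - y^2 = 0 := by rw [← h2]; ring
      rw [hz, Real.sqrt_zero, div_zero, norm_zero, hg]
      have h4 : (0:ℝ) ≤ y ^ (-(1:ℝ)/2) + (2*b - y) ^ (-(1:ℝ)/2) := by
        apply add_nonneg <;> apply Real.rpow_nonneg <;> linarith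
      positivity
    · have hsq2 : 0 < Real.sqrt (2*b - y) := Real.sqrt_pos.2 (by linarith)
      have hsplit : Real.sqrt (2*b*y - y^2) = Real.sqrt y * Real.sqrt (2*b - y) := by
        rw [← Real.sqrt_mul hy0.le]; congr 1; ring
      have hkey : |b - y| / (Real.sqrt y * Real.sqrt (2*b - y)) ≤
          Real.sqrt b * (1 / Real.sqrt y + 1 / Real.sqrt (2*b - y)) := by
        rcases le_total y b with hyb | hyb
        · have h3 : Real.sqrt b ≤ Real.sqrt (2*b - y) := Real.sqrt_le_sqrt (by linarith)
          calc |b - y| / (Real.sqrt y * Real.sqrt (2*b - y))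
              ≤ b / (Real.sqrt y * Real.sqrt b) := by gcongr
            _ = Real.sqrt b * (1 / Real.sqrt y) := by
                have hbb : Real.sqrt b * Real.sqrt b = b := Real.mul_self_sqrt hb.le
                rw [mul_one_div, div_eq_div_iff (by positivity) (by positivity)]
                linear_combination (-(Real.sqrt y)) * hbb
            _ ≤ _ := by
                apply mul_le_mul_of_nonneg_left _ hsqb.le
                have h5 : (0:ℝ) ≤ 1 / Real.sqrt (2*b - y) := by positivity
                linarith
        · have h3 : Real.sqrt b ≤ Real.sqrt y := Real.sqrt_le_sqrt hyb
          calc |b - y| / (Real.sqrt y * Real.sqrt (2*b - y))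
              ≤ b / (Real.sqrt b * Real.sqrt (2*b - y)) := by gcongr
            _ = Real.sqrt b * (1 / Real.sqrt (2*b - y)) := by
                have hbb : Real.sqrt b * Real.sqrt b = b := Real.mul_self_sqrt hb.le
                rw [mul_one_div, div_eq_div_iff (by positivity) (by positivity)]
                linear_combination (-(Real.sqrt (2*b - y))) * hbb
            _ ≤ _ := by
                apply mul_le_mul_of_nonneg_left _ hsqb.le
                have h5 : (0:ℝ) ≤ 1 / Real.sqrt y := by positivity
                linarith
      have hnormeq : ‖Real.exp (-s*y) * (b - y) / Real.sqrt (2*b*y - y^2)‖ =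
          Real.exp (-s*y) * (|b - y| / (Real.sqrt y * Real.sqrt (2*b - y))) := by
        rw [hsplit, norm_div, norm_mul, Real.norm_eq_abs, Real.norm_eq_abs, Real.norm_eq_abs,
          abs_of_pos (Real.exp_pos _),
          abs_of_pos (by positivity : 0 < Real.sqrt y * Real.sqrt (2*b-y)), mul_div_assoc]
      rw [hnormeq, hg]
      show _ ≤ C * (y ^ (-(1:ℝ)/2) + (2*b - y) ^ (-(1:ℝ)/2))
      rw [hrpow1, hrpow2]
      calc Real.exp (-s*y) * (|b - y| / (Real.sqrt y * Real.sqrt (2*b - y)))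
          ≤ Real.exp (2 * |s| * b) * (Real.sqrt b * (1 / Real.sqrt y + 1 / Real.sqrt (2*b - y))) :=
            mul_le_mul hexp hkey (by positivity) (Real.exp_pos _).le
        _ = C * (1 / Real.sqrt y + 1 / Real.sqrt (2*b - y)) := by rw [hC]; ring
  exact hmain.trans (le_abs_self _)

open intervalIntegral in
lemma ftc_lemma (s b : ℝ) (hb : 0 < b) :
    (∫ y in (0:ℝ)..(2*b), Real.exp (-s*y) * (b - y) / Real.sqrt (2*b*y - y^2)) =
    s * ∫ y in (0:ℝ)..(2*b), Real.exp (-s*y) * Real.sqrt (2*b*y - y^2) := by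
  set F : ℝ → ℝ := fun y => Real.exp (-s*y) * Real.sqrt (2*b*y - y^2) with hF
  set F' : ℝ → ℝ := fun y => Real.exp (-s*y) * (b - y) / Real.sqrt (2*b*y - y^2)
    - s * (Real.exp (-s*y) * Real.sqrt (2*b*y - y^2)) with hF'
  have hcont : ContinuousOn F (Icc 0 (2*b)) := by
    apply Continuous.continuousOn
    exact (Real.continuous_exp.comp (by fun_prop)).mul (Real.continuous_sqrt.comp (by fun_prop))
  have hderiv : ∀ y ∈ Ioo (0:ℝ) (2*b), HasDerivAt F (F' y) y := by
    intro y hy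
    have hu : 0 < 2*b*y - y^2 := by nlinarith [hy.1, hy.2]
    have hsq : 0 < Real.sqrt (2*b*y - y^2) := Real.sqrt_pos.2 hu
    have hd1 : HasDerivAt (fun y : ℝ => 2*b*y - y^2) (2*b - 2*y) y := by
      have := ((hasDerivAt_id y).const_mul (2*b)).fun_sub ((hasDerivAt_pow 2 y))
      simpa using this
    have hd2 : HasDerivAt (fun y : ℝ => Real.sqrt (2*b*y - y^2))
        (1 / (2 * Real.sqrt (2*b*y - y^2)) * (2*b - 2*y)) y :=
      (Real.hasDerivAt_sqrt hu.ne').comp y hd1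
    have hd3 : HasDerivAt (fun y : ℝ => Real.exp (-s*y)) (Real.exp (-s*y) * (-s)) y := by
      have h0 : HasDerivAt (fun y : ℝ => -s*y) (-s) y := by
        simpa using (hasDerivAt_id y).const_mul (-s)
      exact h0.exp
    have := hd3.fun_mul hd2
    refine this.congr_deriv ?_
    rw [hF']
    field_simp
    ring
  have hint : IntervalIntegrable F' volume 0 (2*b) := by
    apply IntervalIntegrable.sub (intble s b hb)
    apply Continuous.intervalIntegrable
    exact continuous_const.mul ((Real.continuous_exp.comp (by fun_prop)).mul
      (Real.continuous_sqrt.comp (by fun_prop)))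
  have key := intervalIntegral.integral_eq_sub_of_hasDeriv_right_of_le (by linarith)
    hcont (fun y hy => (hderiv y hy).hasDerivWithinAt) hint
  have hF0 : F 0 = 0 := by rw [hF]; simp
  have hF2b : F (2*b) = 0 := by
    rw [hF]; simp only []
    have : 2*b*(2*b) - (2*b)^2 = 0 := by ring
    rw [this, Real.sqrt_zero, mul_zero]
  rw [hF0, hF2b, sub_zero] at key
  have hcont2 : Continuous (fun y : ℝ => s * (Real.exp (-s*y) * Real.sqrt (2*b*y - y^2))) :=
    continuous_const.mul ((Real.continuous_exp.comp (by fun_prop)).mul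
      (Real.continuous_sqrt.comp (by fun_prop)))
  have hsplit : (∫ y in (0:ℝ)..(2*b), F' y) =
      (∫ y in (0:ℝ)..(2*b), Real.exp (-s*y) * (b - y) / Real.sqrt (2*b*y - y^2)) -
      ∫ y in (0:ℝ)..(2*b), s * (Real.exp (-s*y) * Real.sqrt (2*b*y - y^2)) :=
    intervalIntegral.integral_sub (intble s b hb) (hcont2.intervalIntegrable 0 (2*b))
  rw [hsplit] at key
  rw [sub_eq_zero.1 key, intervalIntegral.integral_const_mul]

theorem stmt5 (s b : ℝ) (hb : 0 < b) :
    ∫ y in (0:ℝ)..(2*b), Real.exp (-s*y) * (b - y) / Real.sqrt (2*b*y - y^2) =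
      π * b * Real.exp (-s*b) * I1 (s*b) := by
  rw [ftc_lemma s b hb, subst_lemma s b hb, swap_lemma (s*b)]
  simp only [cos_sin_sq]
  set c : ℝ := s*b with hc
  set T : ℕ → ℝ := fun n => c^n / (n.factorial : ℝ) * ((∫ θ in (0:ℝ)..π, Real.cos θ ^ n) / (n+2))
    with hT
  have hCbd : ∀ n : ℕ, |∫ θ in (0:ℝ)..π, Real.cos θ ^ n| ≤ π := by
    intro n
    have h := intervalIntegral.norm_integral_le_of_norm_le_const (C := 1)
      (f := fun θ => Real.cos θ ^ n) (a := 0) (b := π) (fun x _ => by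
        rw [Real.norm_eq_abs, abs_pow]
        exact pow_le_one₀ (abs_nonneg _) (Real.abs_cos_le_one x))
    rw [Real.norm_eq_abs] at h
    simpa [abs_of_pos Real.pi_pos] using h
  have hTsum : Summable T := by
    apply Summable.of_norm_bounded ((Real.summable_pow_div_factorial |c|).mul_right π)
    intro n
    rw [hT]
    simp only [Real.norm_eq_abs]
    rw [abs_mul, abs_div, abs_pow, abs_div]
    have e1 : |((n.factorial:ℝ))| = (n.factorial:ℝ) := abs_of_pos (by positivity)
    have e2 : |((n:ℝ)+2)| = (n:ℝ)+2 := abs_of_pos (by positivity)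
    rw [e1, e2]
    have h3 : |∫ θ in (0:ℝ)..π, Real.cos θ ^ n| / ((n:ℝ)+2) ≤ π :=
      le_trans (div_le_self (abs_nonneg _) (by linarith [Nat.cast_nonneg (α := ℝ) n])) (hCbd n)
    apply mul_le_mul_of_nonneg_left h3 (by positivity)
  have heven : Summable (fun k => T (2*k)) :=
    hTsum.comp_injective (fun a b h => by omega)
  have hodd : Summable (fun k => T (2*k+1)) :=
    hTsum.comp_injective (fun a b h => by omega)
  rw [← tsum_even_add_odd heven hodd]
  have hoddzero : ∀ k : ℕ, T (2*k+1) = 0 := by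
    intro k
    rw [hT]
    simp [cos_pow_odd k]
  simp only [hoddzero, tsum_zero, add_zero]
  rw [I1]
  have lhs_eq : s * (b^2 * Real.exp (-s*b) * ∑' k : ℕ, T (2*k)) =
      ∑' k : ℕ, (s * b^2 * Real.exp (-s*b)) * T (2*k) := by
    rw [tsum_mul_left]; ring
  have rhs_eq : π * b * Real.exp (-s*b) *
      (∑' k : ℕ, (1 / ((k.factorial : ℝ) * ((k+1).factorial : ℝ))) * (c/2)^(2*k+1)) =
      ∑' k : ℕ, (π * b * Real.exp (-s*b)) *
        ((1 / ((k.factorial : ℝ) * ((k+1).factorial : ℝ))) * (c/2)^(2*k+1)) := by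
    rw [tsum_mul_left]
  rw [lhs_eq, rhs_eq]
  apply tsum_congr
  intro k
  rw [hT]
  simp only [cos_pow_even k]
  have hfk : ((k.factorial:ℝ)) ≠ 0 := Nat.cast_ne_zero.2 (Nat.factorial_ne_zero _)
  have hf2k : (((2*k).factorial:ℝ)) ≠ 0 := Nat.cast_ne_zero.2 (Nat.factorial_ne_zero _)
  have h4k : (4:ℝ)^k ≠ 0 := by positivity
  have hk2 : (((2*k:ℕ):ℝ)+2) ≠ 0 := by positivity
  have hfk1 : ((k+1).factorial : ℝ) = (k+1) * (k.factorial:ℝ) := by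
    rw [Nat.factorial_succ]; push_cast; ring
  have hpow : (c/2)^(2*k+1) = c^(2*k) * c / (2 * 4^k) := by
    rw [div_pow, pow_succ]
    congr 1
    rw [pow_succ, pow_mul]
    norm_num
    ring
  rw [hfk1, hpow, hc]
  have hck : (s*b)^(2*k) = s^(2*k) * b^(2*k) := mul_pow s b (2*k)
  push_cast
  field_simp
end

section
/- For every real s and every b > 0, ∫_0^{2b} e^{−sy} / √(2by − y²) dy = π e^{−sb} I₀(sb). -/
open Real MeasureTheory Set

lemma cos_pow_even_int (k : ℕ) :
    ∫ x in (0:ℝ)..π, Real.cos x ^ (2*k) =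
      π * ((2*k).factorial : ℝ) / (4^k * ((k.factorial:ℝ))^2) := by
  induction k with
  | zero => simp
  | succ k ih =>
    have h2 : 2*(k+1) = 2*k + 2 := by ring
    rw [h2, integral_cos_pow, ih]
    simp [Real.sin_pi]
    have hf : (((2*k+2).factorial : ℝ)) = ((2*k).factorial : ℝ) * (2*k+1) * (2*k+2) := by
      have : 2*k+2 = (2*k+1) + 1 := by ring
      rw [this, Nat.factorial_succ, Nat.factorial_succ]
      push_cast; ring
    have hk : ((k+1).factorial : ℝ) = (k.factorial : ℝ) * (k+1) := by
      rw [Nat.factorial_succ]; push_cast; ring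
    rw [hf, hk]
    have h1 : ((k.factorial : ℝ)) ≠ 0 := Nat.cast_ne_zero.2 k.factorial_ne_zero
    have h4 : (4:ℝ)^k ≠ 0 := by positivity
    have h5 : (2*(k:ℝ)+2) ≠ 0 := by positivity
    field_simp
    ring

lemma cos_pow_odd_int (k : ℕ) :
    ∫ x in (0:ℝ)..π, Real.cos x ^ (2*k+1) = 0 := by
  induction k with
  | zero => simp
  | succ k ih =>
    have h2 : 2*(k+1)+1 = (2*k+1) + 2 := by ring
    rw [h2, integral_cos_pow, ih]
    simp [Real.sin_pi]

lemma summable_I0 (c : ℝ) : Summable (fun k : ℕ => (c/2)^(2*k) / ((k.factorial:ℝ))^2) := by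
  refine Summable.of_nonneg_of_le (f := fun k : ℕ => ((c/2)^2)^k / (k.factorial:ℝ))
    (fun k => ?_) (fun k => ?_) (Real.summable_pow_div_factorial _)
  · show (0:ℝ) ≤ (c/2)^(2*k) / ((k.factorial:ℝ))^2
    rw [pow_mul]; positivity
  · show (c/2)^(2*k) / ((k.factorial:ℝ))^2 ≤ ((c/2)^2)^k / (k.factorial:ℝ)
    rw [pow_mul]
    have h1 : (1:ℝ) ≤ (k.factorial:ℝ) := by exact_mod_cast k.factorial_pos
    have h2 : (0:ℝ) < (k.factorial:ℝ) := by linarith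
    apply div_le_div_of_nonneg_left (by positivity) h2
    nlinarith

set_option maxHeartbeats 1000000 in
lemma integral_exp_cos (c : ℝ) :
    ∫ θ in (0:ℝ)..π, Real.exp (c * Real.cos θ) = π * I0 c := by
  set μ := volume.restrict (Ioc (0:ℝ) π) with hμ
  set F : ℕ → ℝ → ℝ := fun n θ => (c * Real.cos θ)^n / n.factorial with hF
  have hint : ∀ n, Integrable (F n) μ := by
    intro n
    exact ((continuous_const.mul Real.continuous_cos).pow n |>.div_const _).integrableOn_Ioc
  have hbound : ∀ n, (∫ θ, ‖F n θ‖ ∂μ) ≤ π * (|c|^n / n.factorial) := by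
    intro n
    have h1 : (∫ θ, ‖F n θ‖ ∂μ) ≤ ∫ _θ, |c|^n / n.factorial ∂μ := by
      apply integral_mono (hint n).norm
      · exact integrableOn_const measure_Ioc_lt_top.ne
      · intro θ
        show ‖F n θ‖ ≤ |c|^n / (n.factorial:ℝ)
        have he : ‖F n θ‖ = |c * Real.cos θ|^n / (n.factorial:ℝ) := by
          rw [hF]
          rw [Real.norm_eq_abs, abs_div, abs_pow, Nat.abs_cast]
        rw [he]
        have hfp : (0:ℝ) < (n.factorial:ℝ) := by exact_mod_cast n.factorial_pos
        have hc : |c * Real.cos θ| ≤ |c| :=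
          calc |c * Real.cos θ| = |c| * |Real.cos θ| := abs_mul _ _
            _ ≤ |c| * 1 := mul_le_mul_of_nonneg_left (Real.abs_cos_le_one θ) (abs_nonneg c)
            _ = |c| := mul_one _
        gcongr
    calc (∫ θ, ‖F n θ‖ ∂μ) ≤ ∫ _θ, |c|^n / n.factorial ∂μ := h1
      _ = π * (|c|^n / n.factorial) := by
          rw [hμ, setIntegral_const, measureReal_def, Real.volume_Ioc, smul_eq_mul,
            ENNReal.toReal_ofReal (by linarith [Real.pi_pos])]
          ring_nf
  have hsum : Summable (fun n => ∫ θ, ‖F n θ‖ ∂μ) := by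
    apply Summable.of_nonneg_of_le
      (fun n => integral_nonneg (fun θ => norm_nonneg _)) hbound
    exact (Real.summable_pow_div_factorial |c|).mul_left π
  have H := hasSum_integral_of_summable_integral_norm hint hsum
  have hexp : ∀ θ : ℝ, (∑' n, F n θ) = Real.exp (c * Real.cos θ) := by
    intro θ
    rw [Real.exp_eq_exp_ℝ, NormedSpace.exp_eq_tsum_div]
  simp only [hexp] at H
  -- identify each integral with an interval integral
  have hival : ∀ n, (∫ θ, F n θ ∂μ) = (c^n / n.factorial) * ∫ θ in (0:ℝ)..π, Real.cos θ ^ n := by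
    intro n
    rw [hμ, ← intervalIntegral.integral_of_le Real.pi_pos.le,
      ← intervalIntegral.integral_const_mul]
    apply intervalIntegral.integral_congr
    intro θ _
    simp only [hF, mul_pow]
    ring
  have heven : ∀ k : ℕ, (∫ θ, F (2*k) θ ∂μ) = π * ((c/2)^(2*k) / ((k.factorial:ℝ))^2) := by
    intro k
    rw [hival, cos_pow_even_int]
    have h2 : ((2*k).factorial : ℝ) ≠ 0 := Nat.cast_ne_zero.2 (2*k).factorial_ne_zero
    have h4 : (4:ℝ)^k = 2^(2*k) := by rw [pow_mul]; norm_num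
    rw [div_pow, h4]
    have h2k : (2:ℝ)^(2*k) ≠ 0 := by positivity
    field_simp
  have hodd : ∀ k : ℕ, (∫ θ, F (2*k+1) θ ∂μ) = 0 := by
    intro k
    rw [hival, cos_pow_odd_int, mul_zero]
  have H2 : HasSum (fun n => ∫ θ, F n θ ∂μ) (π * I0 c) := by
    have he : HasSum (fun k => ∫ θ, F (2*k) θ ∂μ) (π * I0 c) := by
      simp only [heven]
      unfold I0
      exact ((summable_I0 c).hasSum).mul_left π
    have ho : HasSum (fun k => ∫ θ, F (2*k+1) θ ∂μ) 0 := by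
      simp only [hodd]; exact hasSum_zero
    have h := HasSum.even_add_odd (f := fun n => ∫ θ, F n θ ∂μ) he ho
    rwa [add_zero] at h
  have hfin := H.unique H2
  rw [intervalIntegral.integral_of_le Real.pi_pos.le, ← hμ, hfin]

theorem stmt6 (s b : ℝ) (hb : 0 < b) :
    ∫ y in (0:ℝ)..(2*b), Real.exp (-s*y) / Real.sqrt (2*b*y - y^2) =
      π * Real.exp (-s*b) * I0 (s*b) := by
  have hb2 : (0:ℝ) < 2*b := by linarith
  set g : ℝ → ℝ := fun θ => b - b * Real.cos θ with hg
  have hderiv : ∀ θ ∈ Ioo (0:ℝ) π, HasDerivWithinAt g (b * Real.sin θ) (Ioo (0:ℝ) π) θ := by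
    intro θ _
    have h : HasDerivAt g (b * Real.sin θ) θ := by
      have h1 := ((Real.hasDerivAt_cos θ).const_mul b).const_sub b
      simpa [hg, mul_comm] using h1
    exact h.hasDerivWithinAt
  have hinj : InjOn g (Ioo (0:ℝ) π) := by
    intro x hx y hy hxy
    have hx' : x ∈ Icc (0:ℝ) π := Ioo_subset_Icc_self hx
    have hy' : y ∈ Icc (0:ℝ) π := Ioo_subset_Icc_self hy
    apply Real.injOn_cos hx' hy'
    have : b * Real.cos x = b * Real.cos y := by
      have := hxy
      simp only [hg] at this
      linarith
    exact mul_left_cancel₀ hb.ne' this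
  have himg : g '' (Ioo (0:ℝ) π) = Ioo (0:ℝ) (2*b) := by
    ext y
    constructor
    · rintro ⟨θ, hθ, rfl⟩
      have h1 : Real.cos θ < 1 := by
        have := Real.strictAntiOn_cos (left_mem_Icc.2 Real.pi_pos.le)
          (Ioo_subset_Icc_self hθ) hθ.1
        simpa using this
      have h2 : -1 < Real.cos θ := by
        have := Real.strictAntiOn_cos (Ioo_subset_Icc_self hθ)
          (right_mem_Icc.2 Real.pi_pos.le) hθ.2
        simpa using this
      constructor
      · simp only [hg]; nlinarith
      · simp only [hg]; nlinarith
    · intro hy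
      refine ⟨Real.arccos (1 - y/b), ?_, ?_⟩
      · constructor
        · exact Real.arccos_pos.2 (by have := div_pos hy.1 hb; linarith)
        · refine lt_of_le_of_ne (Real.arccos_le_pi _) (fun heq => ?_)
          have hlt2 : y/b < 2 := (div_lt_iff₀ hb).2 (by linarith [hy.2])
          have hm1 : (-1:ℝ) ≤ 1 - y/b := by linarith
          have h1 : 1 - y/b ≤ 1 := by
            have : 0 < y/b := div_pos hy.1 hb
            linarith
          have := Real.cos_arccos hm1 h1
          rw [heq, Real.cos_pi] at this
          linarith
      · have hm1 : (-1:ℝ) ≤ 1 - y/b := by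
          have : y/b < 2 := (div_lt_iff₀ hb).2 (by linarith [hy.2])
          linarith
        have h1 : 1 - y/b ≤ 1 := by
          have : 0 < y/b := div_pos hy.1 hb
          linarith
        simp only [hg, Real.cos_arccos hm1 h1]
        field_simp
        ring
  have key := integral_image_eq_integral_abs_deriv_smul measurableSet_Ioo hderiv hinj
      (fun y => Real.exp (-s*y) / Real.sqrt (2*b*y - y^2))
  rw [himg] at key
  have hcong : EqOn
      (fun θ => |b * Real.sin θ| • (Real.exp (-s * (g θ)) / Real.sqrt (2*b*(g θ) - (g θ)^2)))
      (fun θ => Real.exp (-(s*b)) * Real.exp ((s*b) * Real.cos θ)) (Ioo (0:ℝ) π) := by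
    intro θ hθ
    have hsin : 0 < Real.sin θ := Real.sin_pos_of_pos_of_lt_pi hθ.1 hθ.2
    have hbs : 0 < b * Real.sin θ := mul_pos hb hsin
    have hsq : 2*b*(g θ) - (g θ)^2 = (b * Real.sin θ)^2 := by
      have h := Real.sin_sq_add_cos_sq θ
      simp only [hg]
      linear_combination (-b^2) * h
    simp only [hsq, smul_eq_mul]
    rw [Real.sqrt_sq hbs.le, abs_of_pos hbs]
    rw [mul_comm, div_mul_cancel₀ _ hbs.ne', ← Real.exp_add]
    congr 1
    simp only [hg]
    ring
  rw [intervalIntegral.integral_of_le hb2.le, MeasureTheory.integral_Ioc_eq_integral_Ioo, key,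
    setIntegral_congr_fun measurableSet_Ioo hcong, MeasureTheory.integral_const_mul,
    ← MeasureTheory.integral_Ioc_eq_integral_Ioo,
    ← intervalIntegral.integral_of_le Real.pi_pos.le, integral_exp_cos]
  ring_nf
end

section
/- For all x ∈ ℝ and t > 0, ∫_ℝ |H(x − ξ, t)| dξ ≤ λ(t) e^{−qt}, where q = min(a, βε, δd) and λ(t) = 1 + πt(√ε + √δ + πt√(δε)). -/
open Real MeasureTheory Set

lemma wallis_prod (n : ℕ) :
    ∏ i ∈ Finset.range n, (2*(i:ℝ)+1)/(2*i+2) = ((2*n).factorial : ℝ) / (4^n * ((n.factorial:ℝ))^2) := by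
  induction n with
  | zero => simp
  | succ k ih =>
    rw [Finset.prod_range_succ, ih]
    have h1 : ((2*(k+1)).factorial : ℝ) = (2*k+2) * ((2*k+1) * ((2*k).factorial : ℝ)) := by
      have : 2*(k+1) = (2*k+1) + 1 := by ring
      rw [this]
      push_cast [Nat.factorial_succ]
      ring
    have h2 : (((k+1).factorial : ℝ)) = (k+1) * (k.factorial : ℝ) := by
      push_cast [Nat.factorial_succ]; ring
    have hk : ((2*k).factorial : ℝ) ≠ 0 := Nat.cast_ne_zero.2 (Nat.factorial_ne_zero _)
    have hk2 : ((k).factorial : ℝ) ≠ 0 := Nat.cast_ne_zero.2 (Nat.factorial_ne_zero _)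
    rw [h1, h2]
    have h4 : (4:ℝ)^(k+1) = 4 * 4^k := by ring
    rw [h4]
    field_simp
    ring

lemma term_integral (z : ℝ) (k : ℕ) :
    ∫ θ in (0:ℝ)..π, Real.sin θ * ((-1)^k * (z * Real.sin θ)^(2*k+1) / ((2*k+1).factorial : ℝ))
      = π * (((-1 : ℝ)^k / ((k.factorial : ℝ) * ((k+1).factorial : ℝ))) * (z/2)^(2*k+1)) := by
  have h : ∀ θ : ℝ, Real.sin θ * ((-1)^k * (z * Real.sin θ)^(2*k+1) / ((2*k+1).factorial : ℝ))
      = ((-1)^k * z^(2*k+1) / ((2*k+1).factorial : ℝ)) * (Real.sin θ)^(2*(k+1)) := by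
    intro θ
    rw [mul_pow]; ring
  simp_rw [h]
  rw [intervalIntegral.integral_const_mul, integral_sin_pow_even, wallis_prod]
  have e1 : ((2*(k+1)).factorial : ℝ) = (2*k+2) * ((2*k+1).factorial : ℝ) := by
    have : 2*(k+1) = (2*k+1) + 1 := by ring
    rw [this]; push_cast [Nat.factorial_succ]; ring
  have e2 : (((k+1).factorial : ℝ)) = (k+1) * (k.factorial : ℝ) := by
    push_cast [Nat.factorial_succ]; ring
  have hf1 : ((2*k+1).factorial : ℝ) ≠ 0 := Nat.cast_ne_zero.2 (Nat.factorial_ne_zero _)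
  have hf2 : ((k).factorial : ℝ) ≠ 0 := Nat.cast_ne_zero.2 (Nat.factorial_ne_zero _)
  have hp : (z/2)^(2*k+1) = z^(2*k+1) / 2^(2*k+1) := div_pow z 2 _
  rw [e1, e2, hp]
  have h4 : (4:ℝ)^(k+1) = 2 * 2^(2*k+1) := by
    rw [show (4:ℝ) = 2^2 by norm_num, ← pow_mul]
    ring
  rw [h4]
  field_simp

lemma J1_repr (z : ℝ) :
    J1 z = π⁻¹ * ∫ θ in (0:ℝ)..π, Real.sin θ * Real.sin (z * Real.sin θ) := by
  have hπ : (0:ℝ) < π := Real.pi_pos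
  set F : ℕ → ℝ → ℝ := fun k θ =>
    Real.sin θ * ((-1)^k * (z * Real.sin θ)^(2*k+1) / ((2*k+1).factorial : ℝ)) with hF
  have hptw : ∀ θ : ℝ, Real.sin θ * Real.sin (z * Real.sin θ) = ∑' k, F k θ := by
    intro θ
    rw [Real.sin_eq_tsum (z * Real.sin θ), ← tsum_mul_left]
  have hcont : ∀ k, Continuous (F k) := by
    intro k
    exact Real.continuous_sin.mul
      ((continuous_const.mul ((continuous_const.mul Real.continuous_sin).pow _)).div_const _)
  have hint : ∀ k, Integrable (F k) (volume.restrict (Ioc (0:ℝ) π)) := fun k =>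
    (hcont k).integrableOn_Ioc
  have hbound : ∀ k θ, θ ∈ Ioc (0:ℝ) π → ‖F k θ‖ ≤ |z|^(2*k+1) / ((2*k+1).factorial : ℝ) := by
    intro k θ _
    have h1 : |Real.sin θ| ≤ 1 := Real.abs_sin_le_one θ
    have h2 : |z * Real.sin θ| ≤ |z| := by
      rw [abs_mul]
      calc |z| * |Real.sin θ| ≤ |z| * 1 := by gcongr
        _ = |z| := mul_one _
    have hf : (0:ℝ) < ((2*k+1).factorial : ℝ) := Nat.cast_pos.2 (Nat.factorial_pos _)
    rw [hF]
    simp only [Real.norm_eq_abs]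
    rw [abs_mul, abs_div, abs_mul, abs_pow, abs_pow, abs_neg, abs_one, one_pow, one_mul,
      abs_of_pos hf]
    calc |Real.sin θ| * (|z * Real.sin θ|^(2*k+1) / ((2*k+1).factorial : ℝ))
        ≤ 1 * (|z|^(2*k+1) / ((2*k+1).factorial : ℝ)) := by
          gcongr
      _ = |z|^(2*k+1) / ((2*k+1).factorial : ℝ) := one_mul _
  have hsum : Summable fun k => ∫ θ in Ioc (0:ℝ) π, ‖F k θ‖ := by
    have hS0 : Summable (fun n : ℕ => |z|^n / (n.factorial : ℝ)) :=
      Real.summable_pow_div_factorial _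
    have hinj : Function.Injective (fun k : ℕ => 2*k+1) := fun a b hab => by simp only at hab; omega
    have hS1 : Summable ((fun n : ℕ => |z|^n / (n.factorial : ℝ)) ∘ (fun k : ℕ => 2*k+1)) :=
      hS0.comp_injective hinj
    have hS : Summable fun k : ℕ => π * (|z|^(2*k+1) / ((2*k+1).factorial : ℝ)) := hS1.mul_left π
    apply Summable.of_nonneg_of_le (fun k => integral_nonneg (fun θ => norm_nonneg _)) _ hS
    intro k
    calc ∫ θ in Ioc (0:ℝ) π, ‖F k θ‖
        ≤ ∫ _θ in Ioc (0:ℝ) π, |z|^(2*k+1) / ((2*k+1).factorial : ℝ) := by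
          apply setIntegral_mono_on (hint k).norm (integrableOn_const (by
            rw [Real.volume_Ioc]; exact ENNReal.ofReal_ne_top)) measurableSet_Ioc
          exact hbound k
      _ = π * (|z|^(2*k+1) / ((2*k+1).factorial : ℝ)) := by
          rw [setIntegral_const, measureReal_def, Real.volume_Ioc, smul_eq_mul, ENNReal.toReal_ofReal (by linarith)]
          ring_nf
  have swap := integral_tsum_of_summable_integral_norm (μ := volume.restrict (Ioc (0:ℝ) π)) hint hsum
  have : ∫ θ in (0:ℝ)..π, Real.sin θ * Real.sin (z * Real.sin θ) = π * J1 z := by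
    rw [intervalIntegral.integral_of_le hπ.le]
    simp_rw [hptw]
    rw [← swap]
    have : ∀ k : ℕ, ∫ θ in Ioc (0:ℝ) π, F k θ
        = π * (((-1 : ℝ)^k / ((k.factorial : ℝ) * ((k+1).factorial : ℝ))) * (z/2)^(2*k+1)) := by
      intro k
      rw [← intervalIntegral.integral_of_le hπ.le]
      exact term_integral z k
    simp_rw [this]
    rw [tsum_mul_left]
    rfl
  rw [this]
  field_simp

lemma abs_J1_le_one (z : ℝ) : |J1 z| ≤ 1 := by
  have hπ : (0:ℝ) < π := Real.pi_pos
  rw [J1_repr, abs_mul, abs_inv, abs_of_pos hπ]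
  have h : |∫ θ in (0:ℝ)..π, Real.sin θ * Real.sin (z * Real.sin θ)| ≤ |∫ _θ in (0:ℝ)..π, (1:ℝ)| := by
    rw [show |∫ θ in (0:ℝ)..π, Real.sin θ * Real.sin (z * Real.sin θ)|
      = ‖∫ θ in (0:ℝ)..π, Real.sin θ * Real.sin (z * Real.sin θ)‖ from rfl]
    apply intervalIntegral.norm_integral_le_abs_of_norm_le _ intervalIntegrable_const
    filter_upwards with θ
    rw [Real.norm_eq_abs, abs_mul]
    calc |Real.sin θ| * |Real.sin (z * Real.sin θ)| ≤ 1 * 1 := by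
          gcongr
          · exact Real.abs_sin_le_one _
          · exact Real.abs_sin_le_one _
      _ = 1 := one_mul 1
  rw [intervalIntegral.integral_const, smul_eq_mul, mul_one, sub_zero, abs_of_pos hπ] at h
  calc π⁻¹ * |∫ θ in (0:ℝ)..π, Real.sin θ * Real.sin (z * Real.sin θ)| ≤ π⁻¹ * π := by gcongr
    _ = 1 := inv_mul_cancel₀ hπ.ne'

lemma one_div_sqrt_eq_rpow (u : ℝ) : 1 / Real.sqrt u = u ^ (-(1/2) : ℝ) := by
  rcases lt_trichotomy u 0 with h | h | h
  · rw [Real.sqrt_eq_zero_of_nonpos h.le, Real.rpow_def_of_neg h]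
    have : Real.cos (-(1/2) * π) = 0 := by
      rw [show (-(1/2) : ℝ) * π = -(π/2) by ring, Real.cos_neg, Real.cos_pi_div_two]
    rw [this, mul_zero, div_zero]
  · rw [h, Real.sqrt_zero, Real.zero_rpow (by norm_num), div_zero]
  · rw [Real.rpow_neg h.le, Real.sqrt_eq_rpow, one_div]

lemma II_inv_sqrt (t : ℝ) : IntervalIntegrable (fun y => 1 / Real.sqrt (t - y)) volume 0 t := by
  have h : IntervalIntegrable (fun u : ℝ => u ^ (-(1/2) : ℝ)) volume 0 t :=
    intervalIntegral.intervalIntegrable_rpow' (by norm_num)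
  have h2 := h.comp_sub_left t
  simp only [sub_zero, sub_self] at h2
  simp_rw [one_div_sqrt_eq_rpow]
  exact h2.symm

lemma II_id_div_sqrt (t : ℝ) : IntervalIntegrable (fun y => y / Real.sqrt (t - y)) volume 0 t := by
  have h : ∀ y : ℝ, y / Real.sqrt (t - y) = y * (1 / Real.sqrt (t - y)) := by
    intro y; rw [mul_one_div]
  simp_rw [h]
  exact (II_inv_sqrt t).continuousOn_mul continuous_id.continuousOn

lemma integral_inv_sqrt {t : ℝ} (ht : 0 ≤ t) :
    ∫ y in (0:ℝ)..t, 1 / Real.sqrt (t - y) = 2 * Real.sqrt t := by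
  simp_rw [one_div_sqrt_eq_rpow]
  rw [intervalIntegral.integral_comp_sub_left (fun u : ℝ => u ^ (-(1/2) : ℝ)) t]
  rw [sub_self, sub_zero, integral_rpow (Or.inl (by norm_num))]
  rw [Real.zero_rpow (by norm_num), Real.sqrt_eq_rpow]
  norm_num
  rw [div_div_eq_mul_div, mul_comm, mul_div_assoc, div_one]

lemma integral_sqrt_sub {t : ℝ} (ht : 0 ≤ t) :
    ∫ y in (0:ℝ)..t, Real.sqrt (t - y) = 2/3 * t * Real.sqrt t := by
  rw [intervalIntegral.integral_comp_sub_left (fun u : ℝ => Real.sqrt u) t]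
  rw [sub_self, sub_zero]
  have : ∀ u ∈ uIcc (0:ℝ) t, Real.sqrt u = u ^ ((1:ℝ)/2) := fun u _ => Real.sqrt_eq_rpow u
  rw [intervalIntegral.integral_congr this, integral_rpow (Or.inl (by norm_num))]
  rw [Real.zero_rpow (by norm_num)]
  have : t ^ ((1:ℝ)/2 + 1) = t * Real.sqrt t := by
    rw [Real.rpow_add' ht (by norm_num), Real.rpow_one, Real.sqrt_eq_rpow]
    ring
  rw [this]
  ring

lemma integral_id_div_sqrt {t : ℝ} (ht : 0 ≤ t) :
    ∫ y in (0:ℝ)..t, y / Real.sqrt (t - y) = 4/3 * t * Real.sqrt t := by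
  have key : ∀ y ∈ uIcc (0:ℝ) t, y / Real.sqrt (t - y)
      = t * (1 / Real.sqrt (t - y)) - Real.sqrt (t - y) := by
    intro y hy
    rw [uIcc_of_le ht] at hy
    rcases eq_or_lt_of_le hy.2 with h | h
    · rw [h, sub_self, Real.sqrt_zero, div_zero, div_zero, mul_zero, sub_zero]
    · have h0 : 0 < t - y := by linarith
      have hs : 0 < Real.sqrt (t - y) := Real.sqrt_pos.2 h0
      have hss : Real.sqrt (t-y) * Real.sqrt (t-y) = t - y := Real.mul_self_sqrt h0.le
      field_simp
      rw [Real.sq_sqrt h0.le]; ring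
  rw [intervalIntegral.integral_congr key,
    intervalIntegral.integral_sub (((II_inv_sqrt t).const_mul t)) (by
      have h0 : IntervalIntegrable (fun u : ℝ => u ^ ((1:ℝ)/2)) volume 0 t :=
        intervalIntegral.intervalIntegrable_rpow' (by norm_num)
      have h := (h0.comp_sub_left t).symm
      simp only [sub_zero, sub_self] at h
      apply h.congr
      intro u _
      exact (Real.sqrt_eq_rpow (t - u)).symm)]
  rw [intervalIntegral.integral_const_mul, integral_inv_sqrt ht, integral_sqrt_sub ht]
  ring

lemma H1_bound (D a ε β q : ℝ) (hD : 0 < D) (hε : 0 < ε) (hq0 : 0 ≤ q)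
    (hqa : q ≤ a) (hqβ : q ≤ β*ε) (x t : ℝ) (ht : 0 < t) :
    |H1 D a ε β x t| ≤ Real.exp (-x^2/(4*D*t)) * Real.exp (-q*t) *
      (1/(2*Real.sqrt (π*D*t)) + Real.sqrt ε * Real.sqrt t / Real.sqrt (π*D)) := by
  have hπ : (0:ℝ) < π := Real.pi_pos
  set K : ℝ := Real.exp (-x^2/(4*D*t)) * Real.exp (-q*t) * (Real.sqrt ε / Real.sqrt (π*D)) with hK
  have hK0 : 0 ≤ K := by positivity
  set A : ℝ := Real.exp (-x^2/(4*D*t)) / (2 * Real.sqrt (π*D*t)) * Real.exp (-a*t) with hA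
  set I : ℝ := ∫ y in (0:ℝ)..t,
      (Real.exp (-x^2/(4*D*y) - a*y) / Real.sqrt (t-y)) *
      (Real.sqrt ε * Real.exp (-β*ε*(t-y)) / Real.sqrt (π*D)) *
      J1 (2 * Real.sqrt (ε*y*(t-y))) with hI
  have hAbound : |A| ≤ Real.exp (-x^2/(4*D*t)) * Real.exp (-q*t) * (1/(2*Real.sqrt (π*D*t))) := by
    rw [hA, abs_of_nonneg (by positivity)]
    have h2 : Real.exp (-a*t) ≤ Real.exp (-q*t) := by
      apply Real.exp_le_exp.2
      nlinarith
    calc Real.exp (-x^2/(4*D*t)) / (2 * Real.sqrt (π*D*t)) * Real.exp (-a*t)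
        = Real.exp (-x^2/(4*D*t)) * Real.exp (-a*t) * (1/(2*Real.sqrt (π*D*t))) := by ring
      _ ≤ Real.exp (-x^2/(4*D*t)) * Real.exp (-q*t) * (1/(2*Real.sqrt (π*D*t))) := by gcongr
  have hIbound : |I| ≤ K * (2 * Real.sqrt t) := by
    have hg : IntervalIntegrable (fun y => K * (1 / Real.sqrt (t - y))) volume 0 t :=
      (II_inv_sqrt t).const_mul K
    have hle : |I| ≤ |∫ y in (0:ℝ)..t, K * (1 / Real.sqrt (t - y))| := by
      rw [hI, show |∫ y in (0:ℝ)..t,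
          (Real.exp (-x^2/(4*D*y) - a*y) / Real.sqrt (t-y)) *
          (Real.sqrt ε * Real.exp (-β*ε*(t-y)) / Real.sqrt (π*D)) *
          J1 (2 * Real.sqrt (ε*y*(t-y)))| = ‖∫ y in (0:ℝ)..t,
          (Real.exp (-x^2/(4*D*y) - a*y) / Real.sqrt (t-y)) *
          (Real.sqrt ε * Real.exp (-β*ε*(t-y)) / Real.sqrt (π*D)) *
          J1 (2 * Real.sqrt (ε*y*(t-y)))‖ from rfl]
      apply intervalIntegral.norm_integral_le_abs_of_norm_le _ hg
      filter_upwards [ae_restrict_mem measurableSet_uIoc] with y hy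
      rw [uIoc_of_le ht.le] at hy
      obtain ⟨hy0, hyt⟩ := hy
      have hsy : 0 ≤ Real.sqrt (t - y) := Real.sqrt_nonneg _
      rw [Real.norm_eq_abs, abs_mul, abs_mul,
        abs_of_nonneg (by positivity : (0:ℝ) ≤ Real.exp (-x^2/(4*D*y) - a*y) / Real.sqrt (t-y)),
        abs_of_nonneg (by positivity : (0:ℝ) ≤ Real.sqrt ε * Real.exp (-β*ε*(t-y)) / Real.sqrt (π*D))]
      have hexp : Real.exp (-x^2/(4*D*y) - a*y) * Real.exp (-β*ε*(t-y))
          ≤ Real.exp (-x^2/(4*D*t)) * Real.exp (-q*t) := by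
        rw [← Real.exp_add, ← Real.exp_add]
        apply Real.exp_le_exp.2
        have p1 : x^2/(4*D*t) ≤ x^2/(4*D*y) := by
          apply div_le_div_of_nonneg_left (by positivity) (by positivity)
          nlinarith
        have p2 : q*t ≤ a*y + β*ε*(t-y) := by nlinarith
        have p1' : -x^2/(4*D*y) ≤ -x^2/(4*D*t) := by
          rw [neg_div, neg_div]
          linarith
        linarith
      calc Real.exp (-x^2/(4*D*y) - a*y) / Real.sqrt (t-y) *
            (Real.sqrt ε * Real.exp (-β*ε*(t-y)) / Real.sqrt (π*D)) *
            |J1 (2 * Real.sqrt (ε*y*(t-y)))|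
          ≤ Real.exp (-x^2/(4*D*y) - a*y) / Real.sqrt (t-y) *
            (Real.sqrt ε * Real.exp (-β*ε*(t-y)) / Real.sqrt (π*D)) * 1 := by
            exact mul_le_mul_of_nonneg_left (abs_J1_le_one _) (by positivity)
        _ = Real.exp (-x^2/(4*D*y) - a*y) * Real.exp (-β*ε*(t-y)) *
            (Real.sqrt ε / Real.sqrt (π*D)) * (1 / Real.sqrt (t-y)) := by ring
        _ ≤ Real.exp (-x^2/(4*D*t)) * Real.exp (-q*t) *
            (Real.sqrt ε / Real.sqrt (π*D)) * (1 / Real.sqrt (t-y)) := by gcongr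
        _ = K * (1 / Real.sqrt (t-y)) := by rw [hK]
    calc |I| ≤ |∫ y in (0:ℝ)..t, K * (1 / Real.sqrt (t - y))| := hle
      _ = K * (2 * Real.sqrt t) := by
          rw [intervalIntegral.integral_const_mul, integral_inv_sqrt ht.le,
            abs_of_nonneg (by positivity)]
  have htri : |H1 D a ε β x t| ≤ |A| + (1/2) * |I| := by
    rw [H1, ← hA, ← hI]
    calc |A - 1/2 * I| ≤ |A| + |(1/2 : ℝ)| * |I| := by rw [← abs_mul]; exact abs_sub _ _
      _ = |A| + (1/2) * |I| := by norm_num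
  calc |H1 D a ε β x t| ≤ |A| + (1/2) * |I| := htri
    _ ≤ Real.exp (-x^2/(4*D*t)) * Real.exp (-q*t) * (1/(2*Real.sqrt (π*D*t)))
        + (1/2) * (K * (2 * Real.sqrt t)) := by gcongr
    _ = Real.exp (-x^2/(4*D*t)) * Real.exp (-q*t) *
        (1/(2*Real.sqrt (π*D*t)) + Real.sqrt ε * Real.sqrt t / Real.sqrt (π*D)) := by
        rw [hK]; ring

lemma H2_bound (D a ε β δ d q : ℝ) (hD : 0 < D) (hε : 0 < ε) (hδ : 0 < δ) (hq0 : 0 ≤ q)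
    (hqa : q ≤ a) (hqβ : q ≤ β*ε) (hqδ : q ≤ δ*d) (x t : ℝ) (ht : 0 < t) :
    |H2 D a ε β δ d x t| ≤ Real.exp (-x^2/(4*D*t)) * Real.exp (-q*t) *
      (Real.sqrt δ / Real.sqrt (π*D)) * (Real.sqrt t + 4/3 * Real.sqrt ε * t * Real.sqrt t) := by
  have hπ : (0:ℝ) < π := Real.pi_pos
  set C : ℝ := Real.exp (-x^2/(4*D*t)) * Real.exp (-q*t) * (Real.sqrt δ / Real.sqrt (π*D)) with hC
  have hC0 : 0 ≤ C := by positivity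
  set g : ℝ → ℝ := fun y => C * (1/2 * (1 / Real.sqrt (t - y)) + Real.sqrt ε * (y / Real.sqrt (t - y)))
    with hgdef
  have hg : IntervalIntegrable g volume 0 t :=
    ((((II_inv_sqrt t).const_mul (1/2)).add ((II_id_div_sqrt t).const_mul (Real.sqrt ε))).const_mul C)
  have hgi : ∫ y in (0:ℝ)..t, g y = C * (Real.sqrt t + 4/3 * Real.sqrt ε * t * Real.sqrt t) := by
    rw [hgdef]
    rw [intervalIntegral.integral_const_mul]
    rw [intervalIntegral.integral_add ((II_inv_sqrt t).const_mul (1/2))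
      ((II_id_div_sqrt t).const_mul (Real.sqrt ε)),
      intervalIntegral.integral_const_mul, intervalIntegral.integral_const_mul,
      integral_inv_sqrt ht.le, integral_id_div_sqrt ht.le]
    ring
  have hmain : |H2 D a ε β δ d x t| ≤ |∫ y in (0:ℝ)..t, g y| := by
    rw [H2, show |∫ y in (0:ℝ)..t, H1 D a ε β x y * Real.exp (-δ*d*(t-y)) *
        Real.sqrt (δ*y/(t-y)) * J1 (2 * Real.sqrt (δ*y*(t-y)))|
      = ‖∫ y in (0:ℝ)..t, H1 D a ε β x y * Real.exp (-δ*d*(t-y)) *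
        Real.sqrt (δ*y/(t-y)) * J1 (2 * Real.sqrt (δ*y*(t-y)))‖ from rfl]
    apply intervalIntegral.norm_integral_le_abs_of_norm_le _ hg
    filter_upwards [ae_restrict_mem measurableSet_uIoc] with y hy
    rw [uIoc_of_le ht.le] at hy
    obtain ⟨hy0, hyt⟩ := hy
    have hsub : Real.sqrt (δ*y/(t-y)) = Real.sqrt δ * Real.sqrt y / Real.sqrt (t-y) := by
      rw [Real.sqrt_div (by positivity) (t-y), Real.sqrt_mul hδ.le]
    rw [Real.norm_eq_abs, abs_mul, abs_mul, abs_mul,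
      abs_of_nonneg (Real.exp_nonneg _), abs_of_nonneg (Real.sqrt_nonneg _), hsub]
    rcases eq_or_lt_of_le hyt with heq | hlt
    · rw [heq, sub_self, Real.sqrt_zero, div_zero, mul_zero, zero_mul]
      rw [hgdef]
      simp only [sub_self, Real.sqrt_zero, div_zero, mul_zero, zero_mul,
        one_div, inv_zero, add_zero]
      positivity
    · -- y < t
      have htm : 0 < t - y := by linarith
      have hH1 := H1_bound D a ε β q hD hε hq0 hqa hqβ x y hy0
      set s : ℝ := Real.sqrt y with hs
      have hs0 : 0 < s := Real.sqrt_pos.2 hy0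
      have hss : s * s = y := Real.mul_self_sqrt hy0.le
      have hw : (0:ℝ) < Real.sqrt (π*D) := Real.sqrt_pos.2 (by positivity)
      have hπDy : Real.sqrt (π*D*y) = Real.sqrt (π*D) * s := by
        rw [hs, ← Real.sqrt_mul (by positivity)]
      have hexp : Real.exp (-x^2/(4*D*y)) * Real.exp (-q*y) * Real.exp (-δ*d*(t-y))
          ≤ Real.exp (-x^2/(4*D*t)) * Real.exp (-q*t) := by
        rw [← Real.exp_add, ← Real.exp_add, ← Real.exp_add]
        apply Real.exp_le_exp.2
        have p1 : -x^2/(4*D*y) ≤ -x^2/(4*D*t) := by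
          rw [neg_div, neg_div]
          have : x^2/(4*D*t) ≤ x^2/(4*D*y) := by
            apply div_le_div_of_nonneg_left (by positivity) (by positivity)
            nlinarith
          linarith
        have p2 : q*t ≤ q*y + δ*d*(t-y) := by nlinarith
        linarith
      calc |H1 D a ε β x y| * Real.exp (-δ*d*(t-y)) * (Real.sqrt δ * s / Real.sqrt (t-y)) *
            |J1 (2 * Real.sqrt (δ*y*(t-y)))|
          ≤ |H1 D a ε β x y| * Real.exp (-δ*d*(t-y)) * (Real.sqrt δ * s / Real.sqrt (t-y)) * 1 := by
            apply mul_le_mul_of_nonneg_left (abs_J1_le_one _) (by positivity)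
        _ = |H1 D a ε β x y| * (Real.exp (-δ*d*(t-y)) * (Real.sqrt δ * s / Real.sqrt (t-y))) := by
            ring
        _ ≤ (Real.exp (-x^2/(4*D*y)) * Real.exp (-q*y) *
              (1/(2*Real.sqrt (π*D*y)) + Real.sqrt ε * s / Real.sqrt (π*D))) *
            (Real.exp (-δ*d*(t-y)) * (Real.sqrt δ * s / Real.sqrt (t-y))) := by
            apply mul_le_mul_of_nonneg_right hH1 (by positivity)
        _ = (Real.exp (-x^2/(4*D*y)) * Real.exp (-q*y) * Real.exp (-δ*d*(t-y))) *
            (Real.sqrt δ * ((1/(2*Real.sqrt (π*D*y)) + Real.sqrt ε * s / Real.sqrt (π*D)) * s)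
              / Real.sqrt (t-y)) := by ring
        _ = (Real.exp (-x^2/(4*D*y)) * Real.exp (-q*y) * Real.exp (-δ*d*(t-y))) *
            (Real.sqrt δ * (1/(2*Real.sqrt (π*D)) + Real.sqrt ε * y / Real.sqrt (π*D))
              / Real.sqrt (t-y)) := by
            congr 2
            rw [hπDy, ← hss]
            field_simp
        _ ≤ (Real.exp (-x^2/(4*D*t)) * Real.exp (-q*t)) *
            (Real.sqrt δ * (1/(2*Real.sqrt (π*D)) + Real.sqrt ε * y / Real.sqrt (π*D))
              / Real.sqrt (t-y)) := by
            apply mul_le_mul_of_nonneg_right hexp (by positivity)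
        _ = g y := by
            rw [hgdef, hC]
            field_simp
  calc |H2 D a ε β δ d x t| ≤ |∫ y in (0:ℝ)..t, g y| := hmain
    _ = C * (Real.sqrt t + 4/3 * Real.sqrt ε * t * Real.sqrt t) := by
        rw [hgi, abs_of_nonneg (by positivity)]
    _ = Real.exp (-x^2/(4*D*t)) * Real.exp (-q*t) *
      (Real.sqrt δ / Real.sqrt (π*D)) * (Real.sqrt t + 4/3 * Real.sqrt ε * t * Real.sqrt t) := by
        rw [hC]

set_option maxHeartbeats 1000000 in

theorem stmt11 (D a ε β δ d : ℝ) (hD : 0 < D) (ha : 0 < a) (hε : 0 < ε) (hβ : 0 < β) (hδ : 0 < δ) (hd : 0 < d) :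
    ∀ x t : ℝ, 0 < t →
      (∫ ξ : ℝ, |Hker D a ε β δ d (x - ξ) t|) ≤
        (1 + π*t*(Real.sqrt ε + Real.sqrt δ + π*t*Real.sqrt (δ*ε))) * Real.exp (-(min a (min (β*ε) (δ*d)))*t) := by
  intro x t ht
  have hπ : (0:ℝ) < π := Real.pi_pos
  set q : ℝ := min a (min (β*ε) (δ*d)) with hqdef
  have hq0 : 0 ≤ q := le_min ha.le (le_min (by positivity) (by positivity))
  have hqa : q ≤ a := min_le_left _ _
  have hqβ : q ≤ β*ε := le_trans (min_le_right _ _) (min_le_left _ _)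
  have hqδ : q ≤ δ*d := le_trans (min_le_right _ _) (min_le_right _ _)
  set M : ℝ := Real.exp (-q*t) *
      (1/(2*Real.sqrt (π*D*t)) + Real.sqrt ε * Real.sqrt t / Real.sqrt (π*D))
    + Real.exp (-q*t) *
      (Real.sqrt δ / Real.sqrt (π*D)) * (Real.sqrt t + 4/3 * Real.sqrt ε * t * Real.sqrt t)
    with hM
  have hM0 : 0 ≤ M := by positivity
  have hker : ∀ u : ℝ, |Hker D a ε β δ d u t| ≤ Real.exp (-u^2/(4*D*t)) * M := by
    intro u
    calc |Hker D a ε β δ d u t| ≤ |H1 D a ε β u t| + |H2 D a ε β δ d u t| := by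
          rw [Hker]; exact abs_sub _ _
      _ ≤ Real.exp (-u^2/(4*D*t)) * Real.exp (-q*t) *
            (1/(2*Real.sqrt (π*D*t)) + Real.sqrt ε * Real.sqrt t / Real.sqrt (π*D))
          + Real.exp (-u^2/(4*D*t)) * Real.exp (-q*t) *
            (Real.sqrt δ / Real.sqrt (π*D)) * (Real.sqrt t + 4/3 * Real.sqrt ε * t * Real.sqrt t) := by
          exact add_le_add (H1_bound D a ε β q hD hε hq0 hqa hqβ u t ht)
            (H2_bound D a ε β δ d q hD hε hδ hq0 hqa hqβ hqδ u t ht)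
      _ = Real.exp (-u^2/(4*D*t)) * M := by rw [hM]; ring
  -- gaussian integrability and integral
  have hb : (0:ℝ) < 1/(4*D*t) := by positivity
  have hshape : ∀ ξ : ℝ, Real.exp (-(x-ξ)^2/(4*D*t)) = Real.exp (-(1/(4*D*t)) * (x-ξ)^2) := by
    intro ξ; congr 1; field_simp
  have hgauss_int : Integrable (fun ξ : ℝ => Real.exp (-(x-ξ)^2/(4*D*t)) * M) := by
    apply Integrable.mul_const
    simp_rw [hshape]
    exact (integrable_exp_neg_mul_sq hb).comp_sub_left x
  have hgauss_val : (∫ ξ : ℝ, Real.exp (-(x-ξ)^2/(4*D*t))) = 2 * Real.sqrt (π*D*t) := by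
    simp_rw [hshape]
    rw [integral_sub_left_eq_self (fun u : ℝ => Real.exp (-(1/(4*D*t)) * u^2)) volume x]
    rw [integral_gaussian]
    rw [show π / (1/(4*D*t)) = 4*(π*D*t) by field_simp]
    rw [Real.sqrt_mul (by norm_num : (0:ℝ) ≤ 4)]
    rw [show Real.sqrt (4:ℝ) = 2 by
      rw [show (4:ℝ) = 2^2 by norm_num]; exact Real.sqrt_sq (by norm_num)]
  have hmono : (∫ ξ : ℝ, |Hker D a ε β δ d (x - ξ) t|)
      ≤ ∫ ξ : ℝ, Real.exp (-(x-ξ)^2/(4*D*t)) * M := by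
    apply integral_mono_of_nonneg
    · filter_upwards with ξ; exact abs_nonneg _
    · exact hgauss_int
    · filter_upwards with ξ; exact hker (x - ξ)
  have hval : (∫ ξ : ℝ, Real.exp (-(x-ξ)^2/(4*D*t)) * M) = 2 * Real.sqrt (π*D*t) * M := by
    rw [integral_mul_const, hgauss_val]
  -- final arithmetic
  have hw : (0:ℝ) < Real.sqrt (π*D) := Real.sqrt_pos.2 (by positivity)
  have hst : (0:ℝ) < Real.sqrt t := Real.sqrt_pos.2 ht
  have hwt : Real.sqrt (π*D*t) = Real.sqrt (π*D) * Real.sqrt t := by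
    rw [← Real.sqrt_mul (by positivity)]
  have htt : Real.sqrt t * Real.sqrt t = t := Real.mul_self_sqrt ht.le
  have hde : Real.sqrt (δ*ε) = Real.sqrt δ * Real.sqrt ε := Real.sqrt_mul hδ.le ε
  have hfinal : 2 * Real.sqrt (π*D*t) * M
      = Real.exp (-q*t) * (1 + 2*Real.sqrt ε*t + 2*Real.sqrt δ*t + 8/3*Real.sqrt δ*Real.sqrt ε*t^2) := by
    rw [hM, hwt]
    set e := Real.exp (-q*t) with he
    set s := Real.sqrt t with hs
    set w := Real.sqrt (π*D) with hwdef
    rw [show t = s*s from htt.symm]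
    field_simp
    ring
  calc (∫ ξ : ℝ, |Hker D a ε β δ d (x - ξ) t|)
      ≤ 2 * Real.sqrt (π*D*t) * M := by rw [← hval]; exact hmono
    _ = Real.exp (-q*t) * (1 + 2*Real.sqrt ε*t + 2*Real.sqrt δ*t + 8/3*Real.sqrt δ*Real.sqrt ε*t^2) := hfinal
    _ ≤ Real.exp (-q*t) * (1 + π*t*(Real.sqrt ε + Real.sqrt δ + π*t*Real.sqrt (δ*ε))) := by
        apply mul_le_mul_of_nonneg_left _ (Real.exp_pos _).le
        rw [hde]
        have h3 : (3:ℝ) ≤ π := Real.pi_gt_three.le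
        have e1 : (0:ℝ) ≤ (π-2)*(t*Real.sqrt ε) :=
          mul_nonneg (by linarith) (by positivity)
        have e2 : (0:ℝ) ≤ (π-2)*(t*Real.sqrt δ) :=
          mul_nonneg (by linarith) (by positivity)
        have hππ : (9:ℝ) ≤ π*π := by nlinarith
        have e3 : (0:ℝ) ≤ (π*π-8/3)*(t^2*(Real.sqrt δ*Real.sqrt ε)) :=
          mul_nonneg (by linarith) (by positivity)
        nlinarith [e1, e2, e3]
    _ = (1 + π*t*(Real.sqrt ε + Real.sqrt δ + π*t*Real.sqrt (δ*ε))) * Real.exp (-q*t) := by ring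
end
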